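/- arXiv:1109.2696 — 7 statements merged into one kernel-verified Lean document; each statement's English description precedes it below -/
import Mathlib

section
/- In a finite simple graph in which every cycle has length at least 2k+1 (girth at least 2k+1), the number of edges m satisfies m < n^{1+1/k}, where n is the number of vertices and k ≥ 1 is an integer. -/
/-!
Induction on the number of vertices `n`. A vertex of degree at most one can be deleted, because
`(n - 1) ^ (1 + 1/k) + 1 ≤ n ^ (1 + 1/k)`. If every degree is at least two, count the
non-backtracking walks of length `k`. Girth `≥ 2k + 1` makes such a walk determined by its two
endpoints, so there are at most `n ^ 2` of them. On the other hand, by the Alon–Hoory–Linial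
argument there are at least `n d (d - 1) ^ (k - 1)` of them, `d = 2m/n` the average degree: the
non-backtracking random walk started from a uniformly random dart has entropy at least
`log (n d) + (k - 1) log (d - 1)` (stationarity of the uniform distribution on darts, then Jensen
for the convex function `x log (x - 1)`), and the number of walks is at least the exponential of
that entropy. If `m ≥ n ^ (1 + 1/k)`, then `d - 1 ≥ n ^ (1/k)` and the two counts clash.
-/

open Finset Real

theorem hasDerivAt_mul_log_sub_one {x : ℝ} (hx : 1 < x) :
    HasDerivAt (fun y => y * log (y - 1)) (log (x - 1) + x / (x - 1)) x :=
  ((hasDerivAt_id' x).mul (((hasDerivAt_id' x).sub_const 1).log (by linarith))).congr_deriv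
    (by ring)

theorem convexOn_mul_log_sub_one : ConvexOn ℝ (Set.Ici 2) fun x : ℝ => x * log (x - 1) := by
  refine convexOn_of_hasDerivWithinAt2_nonneg (convex_Ici 2)
    (f' := fun x => log (x - 1) + x / (x - 1)) (f'' := fun x => (x - 2) / (x - 1) ^ 2)
    (fun x hx => ?_) (fun x hx => ?_) (fun x hx => ?_) (fun x hx => ?_) <;>
    simp only [interior_Ici, Set.mem_Ioi, Set.mem_Ici] at *
  · exact (hasDerivAt_mul_log_sub_one (by linarith)).continuousAt.continuousWithinAt
  · exact (hasDerivAt_mul_log_sub_one (by linarith)).hasDerivWithinAt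
  · have h1 : x - 1 ≠ 0 := by linarith
    refine HasDerivAt.hasDerivWithinAt <| ((((hasDerivAt_id' x).sub_const 1).log h1).add
      ((hasDerivAt_id' x).div ((hasDerivAt_id' x).sub_const 1) h1)).congr_deriv ?_
    field_simp
    ring
  · exact div_nonneg (by linarith) (sq_nonneg _)

theorem sum_mul_log_average_sub_one_le {ι : Type*} {s : Finset ι} (hs : s.Nonempty) {x : ι → ℝ}
    (hx : ∀ i ∈ s, 2 ≤ x i) :
    (∑ i ∈ s, x i) * log ((∑ i ∈ s, x i) / #s - 1) ≤ ∑ i ∈ s, x i * log (x i - 1) := by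
  have hn : (0 : ℝ) < #s := by exact_mod_cast hs.card_pos
  have hjensen := convexOn_mul_log_sub_one.map_sum_le (t := s) (w := fun _ => (#s : ℝ)⁻¹)
    (p := x) (fun _ _ => by positivity) (by simp [hn.ne']) hx
  simp only [smul_eq_mul, ← mul_sum] at hjensen
  rw [inv_mul_eq_div] at hjensen
  calc _ = #s * ((∑ i ∈ s, x i) / #s * log ((∑ i ∈ s, x i) / #s - 1)) := by field_simp
    _ ≤ #s * ((#s : ℝ)⁻¹ * ∑ i ∈ s, x i * log (x i - 1)) := by gcongr
    _ = _ := by field_simp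

theorem sum_inv_mul_log_le_log_card {ι : Type*} {s : Finset ι} {q : ι → ℝ}
    (hq : ∀ i ∈ s, 0 < q i) (hsum : ∑ i ∈ s, (q i)⁻¹ = 1) :
    ∑ i ∈ s, (q i)⁻¹ * log (q i) ≤ log #s := by
  have hcard : ∑ i ∈ s, (q i)⁻¹ * q i = #s := by
    rw [sum_congr rfl fun i hi => inv_mul_cancel₀ (hq i hi).ne', sum_const, nsmul_one]
  simpa [hcard] using strictConcaveOn_log_Ioi.concaveOn.le_map_sum
    (fun i hi => (inv_pos.mpr (hq i hi)).le) hsum hq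

def List.evalHeadPair {α β : Type*} [Zero β] (g : α → α → β) : List α → β
  | x :: a :: _ => g x a
  | _ => 0

namespace SimpleGraph

section Walks

variable {V : Type*} {G : SimpleGraph V}

theorem Walk.IsTrail.length_le_card {u v : V} {p : G.Walk u v} (hp : p.IsTrail)
    {s : Finset (Sym2 V)} (hs : ∀ e ∈ p.edges, e ∈ s) : p.length ≤ #s := by
  classical
  rw [← p.length_edges, ← List.toFinset_card_of_nodup hp.edges_nodup]
  exact card_le_card fun e he => hs e (List.mem_toFinset.mp he)

/-- The edges of `p` and `q` span a forest, since each of its cycles would have length at most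
`p.length + q.length`. In a forest a walk without backtracking is a path, and paths are unique. -/
theorem Walk.eq_of_length_add_length_lt_egirth [DecidableEq V] {u v : V} {p q : G.Walk u v}
    (hp : p.edges.IsChain (· ≠ ·)) (hq : q.edges.IsChain (· ≠ ·))
    (hlen : (p.length + q.length : ℕ∞) < G.egirth) : p = q := by
  set s : Finset (Sym2 V) := p.edges.toFinset ∪ q.edges.toFinset
  set H : SimpleGraph V := fromEdgeSet s
  have hs : #s ≤ p.length + q.length := by
    calc #s ≤ #p.edges.toFinset + #q.edges.toFinset := card_union_le _ _
      _ ≤ p.edges.length + q.edges.length :=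
        add_le_add (List.toFinset_card_le _) (List.toFinset_card_le _)
      _ = p.length + q.length := by simp
  have hHG : H ≤ G := (fromEdgeSet_le G).mpr fun e he => by
    rcases (by simpa [s] using he.1 : e ∈ p.edges ∨ e ∈ q.edges) with h | h
    exacts [p.edges_subset_edgeSet h, q.edges_subset_edgeSet h]
  have hH : H.IsAcyclic := by
    intro a c hc
    have hcs : c.length ≤ #s := hc.isTrail.length_le_card fun e he => by
      simpa using (Set.ext_iff.mp (edgeSet_fromEdgeSet _) e).mp (c.edges_subset_edgeSet he) |>.1
    have hG := G.egirth_le_length (hc.mapLe hHG)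
    rw [Walk.length_mapLe] at hG
    have : (c.length : ℕ∞) ≤ p.length + q.length := by exact_mod_cast hcs.trans hs
    exact (hG.trans this).not_gt hlen
  have hsub : ∀ {r : G.Walk u v}, r.edges.toFinset ⊆ s → ∀ e ∈ r.edges, e ∈ H.edgeSet := by
    intro r hr e he
    rw [edgeSet_fromEdgeSet]
    exact ⟨hr (List.mem_toFinset.mpr he), G.not_isDiag_of_mem_edgeSet (r.edges_subset_edgeSet he)⟩
  have hpH := hsub subset_union_left
  have hqH := hsub subset_union_right
  have key := (hH.subsingleton_path u v).elim
    ⟨p.transfer H hpH, (hH.isPath_iff_isChain _).mpr (by rwa [Walk.edges_transfer])⟩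
    ⟨q.transfer H hqH, (hH.isPath_iff_isChain _).mpr (by rwa [Walk.edges_transfer])⟩
  apply Walk.ext_support
  simpa using congrArg (fun r : H.Path u v => r.1.support) key

end Walks

section Degrees

variable {V : Type*} [Fintype V] {G : SimpleGraph V} [DecidableRel G.Adj]

theorem sum_sum_neighborFinset_comm {M : Type*} [AddCommMonoid M] (f : V → V → M) :
    ∑ u, ∑ v ∈ G.neighborFinset u, f u v = ∑ u, ∑ v ∈ G.neighborFinset u, f v u :=
  sum_comm' fun u v => by simp [adj_comm]

theorem degree_sub_one_pos (hdeg : ∀ v, 2 ≤ G.degree v) (a : V) :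
    (0 : ℝ) < G.degree a - 1 := by
  have : (2 : ℝ) ≤ G.degree a := by exact_mod_cast hdeg a
  linarith

theorem card_le_card_edgeFinset_of_two_le_degree (hdeg : ∀ v, 2 ≤ G.degree v) :
    Fintype.card V ≤ #G.edgeFinset := by
  have hsum : ∑ _v : V, 2 ≤ ∑ v, G.degree v := sum_le_sum fun v _ => hdeg v
  rw [G.sum_degrees_eq_twice_card_edges, sum_const, card_univ, smul_eq_mul] at hsum
  omega

variable (G) in
/-- For a non-backtracking walk `w` (newest vertex first) in a graph with `m` edges,
`1 / (2 * m * G.branchingProduct w)` is the probability that the non-backtracking random walk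
started from a uniformly random dart traces `w`. -/
noncomputable def branchingProduct : List V → ℝ
  | _ :: a :: b :: t => ((G.degree a : ℝ) - 1) * branchingProduct (a :: b :: t)
  | _ => 1

theorem branchingProduct_pos (hdeg : ∀ v, 2 ≤ G.degree v) (w : List V) :
    0 < G.branchingProduct w := by
  fun_induction G.branchingProduct w with
  | case1 x a b t ih => exact mul_pos (degree_sub_one_pos hdeg a) ih
  | case2 => exact one_pos

end Degrees

section NonBacktrackingWalks

variable {V : Type*} [Fintype V] [DecidableEq V] (G : SimpleGraph V) [DecidableRel G.Adj]

/-- Walks are stored as vertex lists, most recent vertex first. -/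
def nonBacktrackingExtensions : List V → Finset V
  | [] => ∅
  | [a] => G.neighborFinset a
  | a :: b :: _ => (G.neighborFinset a).erase b

/-- Walks of length `l`, i.e. lists of `l + 1` vertices. -/
def nonBacktrackingWalks : ℕ → Finset (List V)
  | 0 => univ.image ([·])
  | l + 1 => (nonBacktrackingWalks l).biUnion fun w =>
      (G.nonBacktrackingExtensions w).image (· :: w)

variable {G}

theorem mem_nonBacktrackingWalks_succ {l : ℕ} {w : List V} :
    w ∈ G.nonBacktrackingWalks (l + 1) ↔
      ∃ w' ∈ G.nonBacktrackingWalks l, ∃ x ∈ G.nonBacktrackingExtensions w', x :: w' = w := by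
  simp [nonBacktrackingWalks]

theorem sum_nonBacktrackingWalks_succ {M : Type*} [AddCommMonoid M] (l : ℕ) (F : List V → M) :
    ∑ w ∈ G.nonBacktrackingWalks (l + 1), F w =
      ∑ w ∈ G.nonBacktrackingWalks l, ∑ x ∈ G.nonBacktrackingExtensions w, F (x :: w) := by
  rw [nonBacktrackingWalks, sum_biUnion]
  · exact sum_congr rfl fun w _ => sum_image fun _ _ _ _ => List.head_eq_of_cons_eq
  · intro w _ w' _ hne
    rw [Function.onFun, Finset.disjoint_left]
    simp only [mem_image]
    rintro _ ⟨x, -, rfl⟩ ⟨y, -, h⟩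
    exact hne (List.cons.inj h).2.symm

theorem exists_walk_of_mem_nonBacktrackingWalks {l : ℕ} {w : List V}
    (hw : w ∈ G.nonBacktrackingWalks l) :
    ∃ (u v : V) (p : G.Walk u v), p.support = w ∧ p.length = l ∧ p.edges.IsChain (· ≠ ·) := by
  induction l generalizing w with
  | zero =>
    obtain ⟨v, rfl⟩ := by simpa [nonBacktrackingWalks] using hw
    exact ⟨v, v, .nil, rfl, rfl, .nil⟩
  | succ l ih =>
    obtain ⟨w', hw', x, hx, rfl⟩ := mem_nonBacktrackingWalks_succ.mp hw
    obtain ⟨u, v, p, rfl, rfl, hp⟩ := ih hw'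
    cases p with
    | nil =>
      exact ⟨x, u, .cons (G.adj_symm (by simpa [nonBacktrackingExtensions] using hx)) .nil,
        rfl, rfl, .singleton _⟩
    | @cons _ u' _ h q =>
      rw [Walk.support_cons, ← q.cons_tail_support] at hx
      obtain ⟨hxu', hxu⟩ : x ≠ u' ∧ G.Adj u x := by simpa [nonBacktrackingExtensions] using hx
      refine ⟨x, v, .cons hxu.symm (.cons h q), rfl, rfl, ?_⟩
      rw [Walk.edges_cons, Walk.edges_cons, List.isChain_cons_cons]
      exact ⟨by simp [hxu', hxu.ne'], hp⟩

theorem exists_cons_cons_of_mem_nonBacktrackingWalks_succ {l : ℕ} {w : List V}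
    (hw : w ∈ G.nonBacktrackingWalks (l + 1)) :
    ∃ a b t, w = a :: b :: t ∧ b ∈ G.neighborFinset a := by
  obtain ⟨u, v, p, rfl, hpl, -⟩ := exists_walk_of_mem_nonBacktrackingWalks hw
  cases p with
  | nil => simp at hpl
  | cons h q => exact ⟨_, _, _, by rw [Walk.support_cons, ← q.cons_tail_support], by simpa⟩

theorem card_nonBacktrackingWalks_le (l : ℕ) (hG : (2 * l + 1 : ℕ∞) ≤ G.egirth) :
    #(G.nonBacktrackingWalks l) ≤ Fintype.card V ^ 2 := by
  let ends (w : List V) : Option V × Option V := (w.head?, w.getLast?)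
  have ends_support {u v : V} (p : G.Walk u v) : ends p.support = (some u, some v) := by
    change (p.support.head?, p.support.getLast?) = _
    rw [List.getLast?_eq_some_getLast p.support_ne_nil, Walk.getLast_support,
      ← p.cons_tail_support]
    rfl
  calc #(G.nonBacktrackingWalks l)
      ≤ #(univ.image fun e : V × V => (some e.1, some e.2)) := by
        refine card_le_card_of_injOn ends (fun w hw => ?_) fun w hw w' hw' hends => ?_
        · obtain ⟨u, v, p, rfl, -⟩ := exists_walk_of_mem_nonBacktrackingWalks hw
          simp [ends_support]
        · obtain ⟨u, v, p, rfl, hpl, hp⟩ := exists_walk_of_mem_nonBacktrackingWalks hw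
          obtain ⟨u', v', q, rfl, hql, hq⟩ := exists_walk_of_mem_nonBacktrackingWalks hw'
          obtain ⟨rfl, rfl⟩ : u = u' ∧ v = v' := by simpa [ends_support] using hends
          refine congrArg Walk.support (Walk.eq_of_length_add_length_lt_egirth hp hq ?_)
          rw [hpl, hql]
          exact lt_of_lt_of_le (by norm_cast; omega) hG
    _ ≤ Fintype.card V ^ 2 := card_image_le.trans (by simp [sq])

/-- The uniform distribution on darts is stationary for the non-backtracking random walk. -/
theorem sum_evalHeadPair_div_branchingProduct (hdeg : ∀ v, 2 ≤ G.degree v) (l : ℕ)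
    (g : V → V → ℝ) :
    ∑ w ∈ G.nonBacktrackingWalks (l + 1), w.evalHeadPair g / G.branchingProduct w =
      ∑ a, ∑ x ∈ G.neighborFinset a, g x a := by
  induction l generalizing g with
  | zero =>
    rw [sum_nonBacktrackingWalks_succ, nonBacktrackingWalks,
      sum_image fun _ _ _ _ => List.head_eq_of_cons_eq]
    simp [nonBacktrackingExtensions, List.evalHeadPair, branchingProduct]
  | succ l ih =>
    let T a b := ((∑ x ∈ G.neighborFinset a, g x a) - g b a) / ((G.degree a : ℝ) - 1)
    have hstep : ∀ w ∈ G.nonBacktrackingWalks (l + 1),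
        ∑ x ∈ G.nonBacktrackingExtensions w,
          (x :: w).evalHeadPair g / G.branchingProduct (x :: w) =
        w.evalHeadPair T / G.branchingProduct w := by
      intro w hw
      obtain ⟨a, b, t, rfl, hb⟩ := exists_cons_cons_of_mem_nonBacktrackingWalks_succ hw
      simp only [nonBacktrackingExtensions, List.evalHeadPair, branchingProduct, T, div_div,
        ← sum_div, sum_erase_eq_sub hb]
      ring
    rw [sum_nonBacktrackingWalks_succ, sum_congr rfl hstep, ih, sum_sum_neighborFinset_comm]
    refine sum_congr rfl fun a _ => ?_
    simp only [T, ← sum_div, sum_sub_distrib, sum_const, card_neighborFinset_eq_degree,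
      nsmul_eq_mul]
    field_simp [(degree_sub_one_pos hdeg a).ne']

theorem sum_inv_branchingProduct (hdeg : ∀ v, 2 ≤ G.degree v) (l : ℕ) :
    ∑ w ∈ G.nonBacktrackingWalks (l + 1), (G.branchingProduct w)⁻¹ = ∑ v, (G.degree v : ℝ) := by
  have h1 : ∀ w ∈ G.nonBacktrackingWalks (l + 1),
      (G.branchingProduct w)⁻¹ = w.evalHeadPair (fun _ _ => 1) / G.branchingProduct w := by
    intro w hw
    obtain ⟨a, b, t, rfl, -⟩ := exists_cons_cons_of_mem_nonBacktrackingWalks_succ hw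
    simp [List.evalHeadPair]
  simp [sum_congr rfl h1, sum_evalHeadPair_div_branchingProduct hdeg]

theorem sum_log_branchingProduct_div (hdeg : ∀ v, 2 ≤ G.degree v) (l : ℕ) :
    ∑ w ∈ G.nonBacktrackingWalks (l + 1), log (G.branchingProduct w) / G.branchingProduct w =
      l * ∑ v, (G.degree v : ℝ) * log ((G.degree v : ℝ) - 1) := by
  induction l with
  | zero =>
    rw [sum_nonBacktrackingWalks_succ, nonBacktrackingWalks,
      sum_image fun _ _ _ _ => List.head_eq_of_cons_eq]
    simp [nonBacktrackingExtensions, branchingProduct]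
  | succ l ih =>
    have hstep : ∀ w ∈ G.nonBacktrackingWalks (l + 1),
        ∑ x ∈ G.nonBacktrackingExtensions w,
          log (G.branchingProduct (x :: w)) / G.branchingProduct (x :: w) =
        w.evalHeadPair (fun a _ => log ((G.degree a : ℝ) - 1)) / G.branchingProduct w +
          log (G.branchingProduct w) / G.branchingProduct w := by
      intro w hw
      obtain ⟨a, b, t, rfl, hb⟩ := exists_cons_cons_of_mem_nonBacktrackingWalks_succ hw
      have ha := degree_sub_one_pos hdeg a
      simp only [nonBacktrackingExtensions, List.evalHeadPair, branchingProduct, sum_const,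
        card_erase_of_mem hb, card_neighborFinset_eq_degree, nsmul_eq_mul,
        Nat.cast_pred (Nat.zero_lt_of_lt (hdeg a)), log_mul ha.ne' (branchingProduct_pos hdeg _).ne']
      field_simp
    rw [sum_nonBacktrackingWalks_succ, sum_congr rfl hstep, sum_add_distrib,
      sum_evalHeadPair_div_branchingProduct hdeg, ih, ← sum_sum_neighborFinset_comm]
    simp only [sum_const, card_neighborFinset_eq_degree, nsmul_eq_mul]
    push_cast
    ring

theorem mul_pow_le_card_nonBacktrackingWalks [Nonempty V] (hdeg : ∀ v, 2 ≤ G.degree v) (l : ℕ) :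
    (2 * #G.edgeFinset : ℝ) * (2 * #G.edgeFinset / Fintype.card V - 1) ^ l ≤
      #(G.nonBacktrackingWalks (l + 1)) := by
  set N := G.nonBacktrackingWalks (l + 1)
  set D : ℝ := 2 * #G.edgeFinset
  set c := ∑ v, (G.degree v : ℝ) * log ((G.degree v : ℝ) - 1)
  have hDsum : ∑ v, (G.degree v : ℝ) = D := by
    simp only [D]
    exact_mod_cast G.sum_degrees_eq_twice_card_edges
  have hβ := branchingProduct_pos hdeg
  have hn : (0 : ℝ) < Fintype.card V := by exact_mod_cast Fintype.card_pos
  have hnm : (Fintype.card V : ℝ) ≤ #G.edgeFinset := by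
    exact_mod_cast card_le_card_edgeFinset_of_two_le_degree hdeg
  have hD : 0 < D := by linarith
  have hd : 1 ≤ D / Fintype.card V - 1 := by
    rw [le_sub_iff_add_le, le_div_iff₀ hn]
    linarith
  have hjensen : D * log (D / Fintype.card V - 1) ≤ c := by
    rw [← hDsum]
    exact sum_mul_log_average_sub_one_le univ_nonempty fun v _ => by exact_mod_cast hdeg v
  have hpos : ∀ w, 0 < D * G.branchingProduct w := fun w => mul_pos hD (hβ w)
  have hweights : ∑ w ∈ N, (D * G.branchingProduct w)⁻¹ = 1 := by
    rw [← inv_mul_cancel₀ hD.ne', ← hDsum, ← sum_inv_branchingProduct hdeg l, mul_sum]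
    exact sum_congr rfl fun w _ => mul_inv _ _
  have hentropy : ∑ w ∈ N, (D * G.branchingProduct w)⁻¹ * log (D * G.branchingProduct w) =
      log D + l * c / D := by
    have hlog w : log (D * G.branchingProduct w) = log D + log (G.branchingProduct w) :=
      log_mul hD.ne' (hβ w).ne'
    simp only [hlog, mul_add, sum_add_distrib, ← sum_mul, hweights, one_mul]
    rw [← sum_log_branchingProduct_div hdeg l, sum_div]
    refine congrArg _ (sum_congr rfl fun w _ => ?_)
    field_simp
  have hN : (0 : ℝ) < #N := by
    exact_mod_cast card_pos.mpr (nonempty_of_sum_ne_zero (hweights ▸ one_ne_zero))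
  have hbound := hentropy ▸ sum_inv_mul_log_le_log_card (fun w _ => hpos w) hweights
  rw [← log_le_log_iff (by positivity) hN, log_mul hD.ne' (by positivity), log_pow]
  refine le_trans ?_ hbound
  rw [add_le_add_iff_left, mul_div_assoc (l : ℝ)]
  gcongr
  rwa [le_div_iff₀ hD, mul_comm]

theorem card_edgeFinset_lt_of_two_le_degree [Nonempty V] (hdeg : ∀ v, 2 ≤ G.degree v) {k : ℕ}
    (hk : 1 ≤ k) (hG : (2 * k + 1 : ℕ∞) ≤ G.egirth) :
    (#G.edgeFinset : ℝ) < (Fintype.card V : ℝ) ^ ((1 : ℝ) + 1 / k) := by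
  have hn : (1 : ℝ) ≤ Fintype.card V := by exact_mod_cast Fintype.card_pos
  have hlower := mul_pow_le_card_nonBacktrackingWalks hdeg (k - 1)
  have hupper : (#(G.nonBacktrackingWalks k) : ℝ) ≤ (Fintype.card V : ℝ) ^ 2 := by
    exact_mod_cast G.card_nonBacktrackingWalks_le k hG
  rw [Nat.sub_add_cancel hk] at hlower
  set n : ℝ := (Fintype.card V : ℝ)
  set x := n ^ (1 / k : ℝ)
  have hx : 1 ≤ x := one_le_rpow hn (by positivity)
  have hxk : x ^ (k - 1) * x = n := by
    rw [← pow_succ, Nat.sub_add_cancel hk, ← rpow_natCast, ← rpow_mul (by linarith),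
      one_div_mul_cancel (by positivity), rpow_one]
  rw [rpow_add (by linarith), rpow_one]
  by_contra! hm
  have hd : x ≤ 2 * #G.edgeFinset / n - 1 := by
    rw [le_sub_iff_add_le, le_div_iff₀ (by linarith)]
    nlinarith
  have : 2 * (n * x) * x ^ (k - 1) ≤ n ^ 2 :=
    calc 2 * (n * x) * x ^ (k - 1)
        ≤ (2 * #G.edgeFinset) * (2 * #G.edgeFinset / n - 1) ^ (k - 1) := by gcongr
      _ ≤ _ := hlower
      _ ≤ n ^ 2 := hupper
  nlinarith

theorem card_edgeFinset_lt_rpow_of_egirth [Nonempty V] {k : ℕ} (hk : 1 ≤ k)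
    (hG : (2 * k + 1 : ℕ∞) ≤ G.egirth) :
    (#G.edgeFinset : ℝ) < (Fintype.card V : ℝ) ^ ((1 : ℝ) + 1 / k) := by
  obtain ⟨n, hn⟩ := Nat.exists_eq_succ_of_ne_zero (Fintype.card_ne_zero (α := V))
  induction n generalizing V with
  | zero =>
    have : #G.edgeFinset = 0 := by simpa [hn] using G.card_edgeFinset_le_card_choose_two
    simp [this, hn]
  | succ n ih =>
    by_cases hdeg : ∀ v, 2 ≤ G.degree v
    · exact card_edgeFinset_lt_of_two_le_degree hdeg hk hG
    obtain ⟨v, hv⟩ := not_forall.mp hdeg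
    have hcard : Fintype.card ({v}ᶜ : Set V) = n + 1 := by simp [filter_ne', hn]
    have : Nonempty ({v}ᶜ : Set V) := Fintype.card_pos_iff.mp (by omega)
    have hH := ih (G := G.induce {v}ᶜ)
      (hG.trans (IsContained.egirth_le ⟨(Embedding.induce _).toCopy⟩)) hcard
    have hedges : #G.edgeFinset = #(G.induce {v}ᶜ).edgeFinset + G.degree v := by
      rw [card_edgeFinset_induce_compl_singleton, card_edgeFinset_deleteIncidenceSet,
        Nat.sub_add_cancel (G.degree_le_card_edgeFinset v)]
    rw [hedges, hn]
    rw [hcard] at hH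
    push_cast at hH ⊢
    calc _ < ((n : ℝ) + 1) ^ ((1 : ℝ) + 1 / k) + 1 ^ ((1 : ℝ) + 1 / k) := by
          rw [one_rpow]
          exact add_lt_add_of_lt_of_le hH (by exact_mod_cast (by omega : G.degree v ≤ 1))
      _ ≤ _ := add_rpow_le_rpow_add (by positivity) zero_le_one
          (le_add_of_nonneg_right (by positivity))

end NonBacktrackingWalks

end SimpleGraph

/-- A finite simple graph of girth at least `2k+1` (every cycle has
length ≥ 2k+1) has fewer than `n^{1+1/k}` edges. -/
theorem moore_bound_edges {V : Type*} [Fintype V] [Nonempty V] [DecidableEq V]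
    (G : SimpleGraph V) [DecidableRel G.Adj] (k : ℕ) (hk : 1 ≤ k)
    (hgirth : (2 * k + 1 : ℕ∞) ≤ G.girth) :
    (G.edgeFinset.card : ℝ) < (Fintype.card V : ℝ) ^ ((1 : ℝ) + 1 / (k : ℝ)) :=
  G.card_edgeFinset_lt_rpow_of_egirth hk (hgirth.trans (ENat.natCast_toNat_le_self _))
end

section
/- Consider the algorithm that processes the edges of a weighted graph G in non-decreasing order of weight, adding edge uv to H only if every u-v path in the current H has more than 2k-1 edges. Then for every edge uv of G there is a path in the final H between u and v with at most 2k-1 edges and total weight at most (2k-1)·ω(uv). -/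
/-! By induction along the sorted edge list, maintain that every edge of the current graph
is at most as heavy as every edge still to be processed. When the edge `uv` is processed,
it is either added, or rejected because of a walk of at most `2k-1` edges, all of which are
already present and hence no heavier than `uv`; later steps only add edges. So `uv` is
spanned in the final graph by a walk of at most `2k-1` edges, each of weight at most
`ω(uv)`, and shortcutting that walk to a path keeps both bounds. -/

/-- The cost of a walk: sum of the weights of its edges. -/
def wcost {V : Type*} {G : SimpleGraph V} {x y : V} (ω : Sym2 V → ℝ) (p : G.Walk x y) : ℝ :=
  (p.edges.map ω).sum

open Classical in
/-- The greedy "dual Kruskal" algorithm: process a list of candidate edges, adding an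
edge `(u,v)` to the current graph `H` only if every `u`-`v` path in `H` has more than
`2k-1` edges (equivalently, there is no `u`-`v` walk of length ≤ 2k-1). -/
noncomputable def greedyHop {V : Type*} (k : ℕ) : List (V × V) → SimpleGraph V → SimpleGraph V
  | [], H => H
  | e :: rest, H =>
      greedyHop k rest
        (if ∃ p : H.Walk e.1 e.2, p.length ≤ 2 * k - 1 then H
         else H ⊔ SimpleGraph.fromEdgeSet {s(e.1, e.2)})

open SimpleGraph

section

variable {V : Type*}

lemma wcost_le_length_mul {G : SimpleGraph V} {x y : V} {ω : Sym2 V → ℝ} {c : ℝ}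
    (p : G.Walk x y) (h : ∀ f ∈ p.edges, ω f ≤ c) : wcost ω p ≤ p.length * c := by
  have hsum : (p.edges.map ω).sum ≤ (p.edges.map ω).length • c :=
    List.sum_le_card_nsmul _ _ fun x hx => by
      obtain ⟨f, hf, rfl⟩ := List.mem_map.mp hx
      exact h f hf
  rwa [List.length_map, Walk.length_edges, nsmul_eq_mul] at hsum

def HasShortLightWalk (k : ℕ) (ω : Sym2 V → ℝ) (H : SimpleGraph V) (u v : V) : Prop :=
  ∃ p : H.Walk u v, p.length ≤ 2 * k - 1 ∧ ∀ f ∈ p.edges, ω f ≤ ω s(u, v)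

namespace HasShortLightWalk

variable {k : ℕ} {ω : Sym2 V → ℝ} {H H' : SimpleGraph V} {u v : V}

lemma mono (h : HasShortLightWalk k ω H u v) (hH : H ≤ H') : HasShortLightWalk k ω H' u v := by
  obtain ⟨p, hlen, hlight⟩ := h
  exact ⟨p.mapLe hH, by rwa [Walk.length_mapLe], by rwa [Walk.edges_mapLe_eq_edges]⟩

lemma symm (h : HasShortLightWalk k ω H v u) : HasShortLightWalk k ω H u v := by
  obtain ⟨p, hlen, hlight⟩ := h
  refine ⟨p.reverse, by rwa [Walk.length_reverse], fun f hf => ?_⟩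
  rw [Sym2.eq_swap]
  exact hlight f (by simpa using hf)

lemma exists_isPath (h : HasShortLightWalk k ω H u v) :
    ∃ p : H.Walk u v, p.IsPath ∧ p.length ≤ 2 * k - 1 ∧ ∀ f ∈ p.edges, ω f ≤ ω s(u, v) := by
  classical
  obtain ⟨p, hlen, hlight⟩ := h
  exact ⟨p.bypass, p.bypass_isPath, p.length_bypass_le_length.trans hlen,
    fun f hf => hlight f (p.edges_bypass_subset_edges hf)⟩

end HasShortLightWalk

open Classical in
noncomputable def greedyStep (k : ℕ) (e : V × V) (H : SimpleGraph V) : SimpleGraph V :=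
  if ∃ p : H.Walk e.1 e.2, p.length ≤ 2 * k - 1 then H else H ⊔ fromEdgeSet {s(e.1, e.2)}

section greedyStep

variable (k : ℕ) (e : V × V) (H : SimpleGraph V)

lemma greedyHop_cons (rest : List (V × V)) :
    greedyHop k (e :: rest) H = greedyHop k rest (greedyStep k e H) := rfl

lemma le_greedyStep : H ≤ greedyStep k e H := by
  unfold greedyStep
  split
  · exact le_rfl
  · exact le_sup_left

lemma edgeSet_greedyStep_subset :
    (greedyStep k e H).edgeSet ⊆ insert s(e.1, e.2) H.edgeSet := by
  unfold greedyStep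
  split
  · exact Set.subset_insert _ _
  · rw [edgeSet_sup, edgeSet_fromEdgeSet, Set.union_comm]
    exact Set.union_subset_union_left _ Set.sdiff_subset

lemma exists_walk_length_le_greedyStep (hk : 1 ≤ k) (hne : e.1 ≠ e.2) :
    ∃ p : (greedyStep k e H).Walk e.1 e.2, p.length ≤ 2 * k - 1 := by
  by_cases hshort : ∃ p : H.Walk e.1 e.2, p.length ≤ 2 * k - 1
  · rwa [greedyStep, if_pos hshort]
  · rw [greedyStep, if_neg hshort]
    have hadj : (H ⊔ fromEdgeSet {s(e.1, e.2)}).Adj e.1 e.2 :=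
      Or.inr ⟨rfl, hne⟩
    exact ⟨hadj.toWalk, by simp only [Walk.length_cons, Walk.length_nil]; omega⟩

end greedyStep

lemma le_greedyHop (k : ℕ) (L : List (V × V)) (H : SimpleGraph V) : H ≤ greedyHop k L H := by
  induction L generalizing H with
  | nil => exact le_rfl
  | cons e rest ih =>
    rw [greedyHop_cons]
    exact (le_greedyStep k e H).trans (ih _)

lemma greedyHop_hasShortLightWalk {k : ℕ} (hk : 1 ≤ k) (ω : Sym2 V → ℝ) (L : List (V × V))
    (H : SimpleGraph V) (hsorted : L.Pairwise fun a b => ω s(a.1, a.2) ≤ ω s(b.1, b.2))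
    (hne : ∀ e ∈ L, e.1 ≠ e.2) (hlight : ∀ f ∈ H.edgeSet, ∀ a ∈ L, ω f ≤ ω s(a.1, a.2)) :
    ∀ e ∈ L, HasShortLightWalk k ω (greedyHop k L H) e.1 e.2 := by
  induction L generalizing H with
  | nil => simp
  | cons a rest ih =>
    rw [greedyHop_cons]
    rw [List.pairwise_cons] at hsorted
    have hlight' : ∀ f ∈ (greedyStep k a H).edgeSet, ω f ≤ ω s(a.1, a.2) := fun f hf => by
      rcases edgeSet_greedyStep_subset k a H hf with rfl | hf
      · exact le_rfl
      · exact hlight f hf a List.mem_cons_self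
    have hhead : HasShortLightWalk k ω (greedyStep k a H) a.1 a.2 := by
      obtain ⟨p, hlen⟩ := exists_walk_length_le_greedyStep k a H hk (hne a List.mem_cons_self)
      exact ⟨p, hlen, fun f hf => hlight' f (p.edges_subset_edgeSet hf)⟩
    rintro e (_ | ⟨_, he⟩)
    · exact hhead.mono (le_greedyHop k rest _)
    · refine ih _ hsorted.2 (fun x hx => hne x (List.mem_cons_of_mem _ hx)) ?_ e he
      intro f hf b hb
      exact (hlight' f hf).trans (hsorted.1 b hb)

end

theorem greedyHop_stretch_general {V : Type*} (G : SimpleGraph V) (ω : Sym2 V → ℝ)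
    (hω : ∀ e ∈ G.edgeSet, 0 < ω e) (k : ℕ) (hk : 1 ≤ k)
    (L : List (V × V))
    (hadj : ∀ e ∈ L, G.Adj e.1 e.2)
    (hall : ∀ u v : V, G.Adj u v → (u, v) ∈ L ∨ (v, u) ∈ L)
    (hsorted : L.Pairwise fun a b => ω s(a.1, a.2) ≤ ω s(b.1, b.2)) :
    ∀ u v : V, G.Adj u v →
      ∃ p : (greedyHop k L ⊥).Walk u v, p.IsPath ∧ p.length ≤ 2 * k - 1 ∧
        wcost ω p ≤ (2 * (k : ℝ) - 1) * ω s(u, v) := by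
  intro u v huv
  have hcover := greedyHop_hasShortLightWalk hk ω L ⊥ hsorted (fun e he => (hadj e he).ne)
    (by simp)
  have hwalk : HasShortLightWalk k ω (greedyHop k L ⊥) u v := by
    rcases hall u v huv with h | h
    · exact hcover _ h
    · exact (hcover _ h).symm
  obtain ⟨p, hpath, hlen, hlight⟩ := hwalk.exists_isPath
  refine ⟨p, hpath, hlen, ?_⟩
  calc wcost ω p ≤ p.length * ω s(u, v) := wcost_le_length_mul p hlight
    _ ≤ ((2 * k - 1 : ℕ) : ℝ) * ω s(u, v) := by
        have hω_uv : 0 ≤ ω s(u, v) := (hω _ huv).le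
        gcongr
    _ = (2 * (k : ℝ) - 1) * ω s(u, v) := by
        rw [Nat.cast_sub (by omega)]
        push_cast
        ring

/-- After running the greedy algorithm on the edges of `G` in
non-decreasing order of weight, every edge `uv` of `G` is covered by a path in the final
graph with at most `2k-1` edges and total weight at most `(2k-1)·ω(uv)`. -/
theorem greedyHop_stretch {V : Type*} [Fintype V] (G : SimpleGraph V) (ω : Sym2 V → ℝ)
    (hω : ∀ e ∈ G.edgeSet, 0 < ω e) (k : ℕ) (hk : 1 ≤ k)
    (L : List (V × V))
    (hadj : ∀ e ∈ L, G.Adj e.1 e.2)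
    (hall : ∀ u v : V, G.Adj u v → (u, v) ∈ L ∨ (v, u) ∈ L)
    (hsorted : L.Pairwise fun a b => ω s(a.1, a.2) ≤ ω s(b.1, b.2)) :
    ∀ u v : V, G.Adj u v →
      ∃ p : (greedyHop k L ⊥).Walk u v, p.IsPath ∧ p.length ≤ 2 * k - 1 ∧
        wcost ω p ≤ (2 * (k : ℝ) - 1) * ω s(u, v) :=
  greedyHop_stretch_general G ω hω k hk L hadj hall hsorted
end

section
/- If u and v are two non-adjacent vertices of a finite graph P and for every set S of at most p-1 vertices of P (excluding u and v) there exists a u-v path in P avoiding S, then P contains p pairwise internally vertex-disjoint paths between u and v. -/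
/-- Two walks with the same endpoints are internally vertex-disjoint if they share no
vertices besides the endpoints. -/
def InternallyDisjoint {V : Type*} {G : SimpleGraph V} {x y : V}
    (p q : G.Walk x y) : Prop :=
  ∀ z ∈ p.support, z ∈ q.support → z = x ∨ z = y

/-- A family of `p` pairwise internally vertex-disjoint paths (a `p`-multipath). -/
def IsMultipath {V : Type*} {G : SimpleGraph V} {x y : V} {p : ℕ}
    (P : Fin p → G.Walk x y) : Prop :=
  (∀ i, (P i).IsPath) ∧ ∀ i j, i ≠ j → InternallyDisjoint (P i) (P j)

/-!
The `u`-`v` statement is the set version of Menger's theorem for `A = N(u)`, `B = N(v)`: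
joining `u` and `v` to `p` disjoint `A`-`B` walks and shortening gives the paths.

The set version, for a digraph with a finite arc set `E`, is Göring's induction on `E`. If
no set of fewer than `k` vertices separates `A` from `B` even after deleting an arc `xy`,
induction applies directly. Otherwise some `S` with `|S| < k` separates them in `E - xy`, so
`X = S ∪ {x}` and `Y = S ∪ {y}` are separators of size exactly `k` in `E`. Induction gives
`k` disjoint `A`-`X` walks using no arc leaving `X`, and `k` disjoint `Y`-`B` walks using
no arc entering `Y`: each separator of those smaller digraphs still separates `A` from `B`
in `E`. A walk of the first family and one of the second can only meet in `S` (otherwise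
splicing them would give an `A`-`B` walk avoiding `S` in `E - xy`), so matching the ends in
`X` with the starts in `Y` through `x ↦ y` and gluing yields `k` disjoint `A`-`B` walks.
-/

namespace List

variable {α : Type*} {R : α → α → Prop} {p : α → Prop} {l : List α}

theorem exists_split_first (h : ∃ x ∈ l, p x) :
    ∃ l₁ x l₂, l = l₁ ++ x :: l₂ ∧ p x ∧ ∀ z ∈ l₁, ¬p z := by
  induction l with
  | nil => simp at h
  | cons a t ih =>
    by_cases ha : p a
    · exact ⟨[], a, t, rfl, ha, by simp⟩
    · obtain ⟨l₁, x, l₂, rfl, hx, hl₁⟩ := ih (by simpa [ha] using h)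
      exact ⟨a :: l₁, x, l₂, rfl, hx, by simpa [ha] using hl₁⟩

theorem exists_split_last (h : ∃ x ∈ l, p x) :
    ∃ l₁ x l₂, l = l₁ ++ x :: l₂ ∧ p x ∧ ∀ z ∈ l₂, ¬p z := by
  obtain ⟨l₁, x, l₂, hl, hx, hl₁⟩ := exists_split_first (l := l.reverse) (by simpa using h)
  refine ⟨l₂.reverse, x, l₁.reverse, ?_, hx, by simpa using hl₁⟩
  simpa using congrArg reverse hl

theorem exists_cons_append_singleton_infix {u v : α} (hu : u ∈ l) (hv : l.getLast? = some v)
    (huv : u ≠ v) : ∃ m, u :: (m ++ [v]) <:+: l ∧ u ∉ m ∧ v ∉ m := by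
  obtain ⟨l₁, _, l₂, rfl, rfl, hl₂⟩ := exists_split_last (p := (u = ·)) ⟨u, hu, rfl⟩
  have hv₂ : v ∈ l₂ := by
    rw [getLast?_append_of_ne_nil _ (cons_ne_nil _ _)] at hv
    exact (mem_cons.1 (mem_of_getLast? hv)).resolve_left huv.symm
  obtain ⟨m, _, l₃, rfl, rfl, hm⟩ := exists_split_first (p := (v = ·)) ⟨v, hv₂, rfl⟩
  exact ⟨m, ⟨l₁, l₃, by simp⟩, fun h => hl₂ u (by simp [h]) rfl, fun h => hm v h rfl⟩

theorem isChain_and_left_iff :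
    l.IsChain (fun a b => R a b ∧ p a) ↔ l.IsChain R ∧ ∀ z ∈ l.dropLast, p z := by
  induction l using twoStepInduction with
  | nil => simp
  | singleton a => simp
  | cons_cons a b t _ ih => simp [isChain_cons_cons, ih]; tauto

theorem isChain_and_right_iff :
    l.IsChain (fun a b => R a b ∧ p b) ↔ l.IsChain R ∧ ∀ z ∈ l.tail, p z := by
  induction l using twoStepInduction with
  | nil => simp
  | singleton a => simp
  | cons_cons a b t _ ih => simp_all [isChain_cons_cons]; tauto

theorem mem_dropLast_append_cons {l₁ l₂ : List α} {x z : α} (hz : z ∈ l₁) :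
    z ∈ (l₁ ++ x :: l₂).dropLast := by
  rw [dropLast_append_cons]
  exact mem_append_left _ hz

theorem mem_tail_append_cons {l₁ l₂ : List α} {x z : α} (hz : z ∈ l₂) :
    z ∈ (l₁ ++ x :: l₂).tail := by
  cases l₁ <;> simp [hz]

end List

namespace Menger

section

variable {V : Type*}

/- Walks may repeat vertices: only disjointness matters, and `SimpleGraph.Walk.bypass` turns
them into paths. -/
structure IsWalk (E : Finset (V × V)) (A B : Finset V) (l : List V) : Prop where
  isChain : l.IsChain fun a b => (a, b) ∈ E
  head_mem : ∃ a ∈ A, l.head? = some a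
  getLast_mem : ∃ b ∈ B, l.getLast? = some b

def Separates (E : Finset (V × V)) (A B S : Finset V) : Prop :=
  ∀ l, IsWalk E A B l → ∃ s ∈ S, s ∈ l

structure IsLinkage (E : Finset (V × V)) (A B : Finset V) {k : ℕ} (P : Fin k → List V) :
    Prop where
  isWalk : ∀ i, IsWalk E A B (P i)
  disjoint : Pairwise fun i j => (P i).Disjoint (P j)

variable {E F : Finset (V × V)} {A B X Y : Finset V} {k : ℕ} {P : Fin k → List V}
  {l m : List V} {z : V}

theorem IsWalk.mono (h : IsWalk E A B l) (hEF : E ⊆ F) : IsWalk F A B l :=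
  ⟨h.isChain.imp fun _ _ hab => hEF hab, h.head_mem, h.getLast_mem⟩

theorem IsWalk.append (hl : IsWalk E A X l) (hm : IsWalk E Y B m)
    (h : ∀ a ∈ l.getLast?, ∀ b ∈ m.head?, (a, b) ∈ E) : IsWalk E A B (l ++ m) := by
  obtain ⟨a, ha, hla⟩ := hl.head_mem
  obtain ⟨b, hb, hmb⟩ := hm.getLast_mem
  exact ⟨hl.isChain.append hm.isChain h, ⟨a, ha, by simp [hla]⟩, ⟨b, hb, by simp [hmb]⟩⟩

theorem IsWalk.append_tail (hl : IsWalk E A X l) (hm : IsWalk E Y B m)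
    (h : l.getLast? = m.head?) : IsWalk E A B (l ++ m.tail) := by
  obtain ⟨a, ha, hla⟩ := hl.head_mem
  obtain ⟨b, hb, hmb⟩ := hm.getLast_mem
  obtain ⟨c, -, hmc⟩ := hm.head_mem
  obtain ⟨t, rfl⟩ := List.head?_eq_some_iff.1 hmc
  refine ⟨hl.isChain.append hm.isChain.tail ?_, ⟨a, ha, by simp [hla]⟩, ⟨b, hb, ?_⟩⟩
  · rw [h]
    rintro _ ⟨⟩ _ hb
    exact hm.isChain.rel_head? hb
  · cases t <;> simp_all

theorem IsLinkage.mono (h : IsLinkage E A B P) (hEF : E ⊆ F) : IsLinkage F A B P :=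
  ⟨fun i => (h.isWalk i).mono hEF, h.disjoint⟩

theorem IsLinkage.comp {n : ℕ} (h : IsLinkage E A B P) {f : Fin n → Fin k}
    (hf : Function.Injective f) : IsLinkage E A B (P ∘ f) :=
  ⟨fun i => h.isWalk (f i), fun _ _ hij => h.disjoint (hf.ne hij)⟩

theorem IsLinkage.eq_of_mem (h : IsLinkage E A B P) {i j : Fin k} (hi : z ∈ P i)
    (hj : z ∈ P j) : i = j := by
  by_contra hij
  exact h.disjoint hij hi hj

theorem IsLinkage.exists_head?_eq (h : IsLinkage E A B P) (hA : A.card ≤ k) :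
    ∀ a ∈ A, ∃ i, (P i).head? = some a := by
  choose f hfA hf using fun i => (h.isWalk i).head_mem
  intro a ha
  obtain ⟨i, -, rfl⟩ := Finset.surj_on_of_inj_on_of_card_le (s := Finset.univ)
    (fun i _ => f i) (fun i _ => hfA i)
    (fun i j _ _ hij => h.eq_of_mem (List.mem_of_mem_head? (hf i))
      (hij ▸ List.mem_of_mem_head? (hf j)))
    (by simpa using hA) a ha
  exact ⟨i, hf i⟩

end

variable {V : Type*} [DecidableEq V] {E : Finset (V × V)} {A B X Y S T : Finset V} {k : ℕ}
  {P Q : Fin k → List V} {l L R : List V} {x y z : V}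

theorem isChain_filter_fst_iff :
    (l.IsChain fun a b => (a, b) ∈ E.filter (·.1 ∉ X)) ↔
      (l.IsChain fun a b => (a, b) ∈ E) ∧ ∀ z ∈ l.dropLast, z ∉ X := by
  simp only [Finset.mem_filter]
  exact List.isChain_and_left_iff

theorem isChain_filter_snd_iff :
    (l.IsChain fun a b => (a, b) ∈ E.filter (·.2 ∉ Y)) ↔
      (l.IsChain fun a b => (a, b) ∈ E) ∧ ∀ z ∈ l.tail, z ∉ Y := by
  simp only [Finset.mem_filter]
  exact List.isChain_and_right_iff

theorem separates_empty_inter : Separates ∅ A B (A ∩ B) := by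
  rintro (_ | ⟨a, _ | ⟨b, t⟩⟩) ⟨hl, ⟨a', ha', hla⟩, ⟨b', hb', hlb⟩⟩
  · simp at hla
  · simp_all
  · simp at hl

theorem exists_linkage_of_le_card_inter (h : k ≤ (A ∩ B).card) :
    ∃ P : Fin k → List V, IsLinkage E A B P := by
  let f : Fin k → ↥(A ∩ B) := (A ∩ B).equivFin.symm ∘ Fin.castLE h
  have hf : Function.Injective f :=
    (A ∩ B).equivFin.symm.injective.comp (Fin.castLE_injective h)
  refine ⟨fun i => [(f i : V)], fun i => ?_, fun i j hij => ?_⟩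
  · have := Finset.mem_inter.1 (f i).2
    exact ⟨.singleton _, ⟨_, this.1, rfl⟩, ⟨_, this.2, rfl⟩⟩
  · simpa [Subtype.val_inj, eq_comm] using hf.ne hij

theorem Separates.insert_of_erase (hS : Separates (E.erase (x, y)) A B S)
    (hz : z = x ∨ z = y) : Separates E A B (insert z S) := by
  intro l hl
  by_cases hzl : z ∈ l
  · exact ⟨z, Finset.mem_insert_self z S, hzl⟩
  have hl' : IsWalk (E.erase (x, y)) A B l := by
    refine ⟨hl.isChain.imp_of_mem_imp fun a b ha hb hab => Finset.mem_erase.2 ⟨?_, hab⟩,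
      hl.head_mem, hl.getLast_mem⟩
    rintro ⟨⟩
    rcases hz with rfl | rfl <;> contradiction
  obtain ⟨s, hs, hsl⟩ := hS l hl'
  exact ⟨s, Finset.mem_insert_of_mem hs, hsl⟩

theorem Separates.of_filter_fst (hX : Separates E A B X)
    (hT : Separates (E.filter (·.1 ∉ X)) A X T) : Separates E A B T := by
  intro l hl
  obtain ⟨l₁, c, l₂, rfl, hc, hl₁⟩ := List.exists_split_first (p := (· ∈ X)) (by
    obtain ⟨s, hs, hsl⟩ := hX l hl
    exact ⟨s, hsl, hs⟩)
  have hchain := List.isChain_split.1 hl.isChain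
  obtain ⟨a, ha, hla⟩ := hl.head_mem
  obtain ⟨t, ht, htl⟩ := hT (l₁ ++ [c])
    ⟨isChain_filter_fst_iff.2 ⟨hchain.1, by simpa using hl₁⟩, ⟨a, ha, by simpa using hla⟩,
      ⟨c, hc, List.getLast?_concat⟩⟩
  exact ⟨t, ht, by simp at htl ⊢; tauto⟩

theorem Separates.of_filter_snd (hY : Separates E A B Y)
    (hT : Separates (E.filter (·.2 ∉ Y)) Y B T) : Separates E A B T := by
  intro l hl
  obtain ⟨l₁, c, l₂, rfl, hc, hl₂⟩ := List.exists_split_last (p := (· ∈ Y)) (by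
    obtain ⟨s, hs, hsl⟩ := hY l hl
    exact ⟨s, hsl, hs⟩)
  have hchain := List.isChain_split.1 hl.isChain
  obtain ⟨b, hb, hlb⟩ := hl.getLast_mem
  obtain ⟨t, ht, htl⟩ := hT (c :: l₂)
    ⟨isChain_filter_snd_iff.2 ⟨hchain.2, hl₂⟩, ⟨c, hc, rfl⟩, ⟨b, hb, by simpa using hlb⟩⟩
  exact ⟨t, ht, by simp_all⟩

theorem Separates.mem_of_mem_of_mem (hS : Separates (E.erase (x, y)) A B S)
    (hL : IsWalk (E.filter (·.1 ∉ insert x S)) A (insert x S) L)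
    (hR : IsWalk (E.filter (·.2 ∉ insert y S)) (insert y S) B R) (hzL : z ∈ L) (hzR : z ∈ R) :
    z ∈ S ∧ R.head? = some z := by
  have hLX := (isChain_filter_fst_iff.1 hL.isChain).2
  have hRY := (isChain_filter_snd_iff.1 hR.isChain).2
  obtain ⟨a, b, rfl⟩ := List.append_of_mem hzL
  obtain ⟨c, d, rfl⟩ := List.append_of_mem hzR
  have hzS : z ∈ S := by
    by_contra hzS
    obtain ⟨a₀, ha₀, hLa₀⟩ := hL.head_mem
    obtain ⟨b₀, hb₀, hRb₀⟩ := hR.getLast_mem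
    have hsplice : IsWalk (E.erase (x, y)) A B (a ++ z :: d) := by
      refine ⟨List.isChain_split.2 ⟨?_, ?_⟩, ⟨a₀, ha₀, by simpa using hLa₀⟩,
        ⟨b₀, hb₀, by simpa using hRb₀⟩⟩
      · refine (List.isChain_split.1 hL.isChain).1.imp fun p q hpq => ?_
        simp only [Finset.mem_filter, Finset.mem_insert, not_or] at hpq
        exact Finset.mem_erase.2 ⟨fun h => hpq.2.1 (Prod.ext_iff.1 h).1, hpq.1⟩
      · refine (List.isChain_split.1 hR.isChain).2.imp fun p q hpq => ?_
        simp only [Finset.mem_filter, Finset.mem_insert, not_or] at hpq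
        exact Finset.mem_erase.2 ⟨fun h => hpq.2.1 (Prod.ext_iff.1 h).2, hpq.1⟩
    obtain ⟨s, hs, hsl⟩ := hS _ hsplice
    rcases List.mem_append.1 hsl with hsa | hsd
    · exact hLX s (List.mem_dropLast_append_cons hsa) (Finset.mem_insert_of_mem hs)
    rcases List.mem_cons.1 hsd with rfl | hsd
    · exact hzS hs
    · exact hRY s (List.mem_tail_append_cons hsd) (Finset.mem_insert_of_mem hs)
  refine ⟨hzS, ?_⟩
  cases c with
  | nil => rfl
  | cons c₀ c => exact absurd (Finset.mem_insert_of_mem hzS) (hRY z (by simp))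

theorem IsLinkage.glue (hP : IsLinkage E A (insert x S) P)
    (hQ : IsLinkage E (insert y S) B Q) (hxy : (x, y) ∈ E) (hyS : y ∉ S) {e : Fin k → V}
    (hPe : ∀ i, (P i).getLast? = some (e i))
    (hQe : ∀ i, (Q i).head? = some (if e i = x then y else e i))
    (hPQ : ∀ i j z, z ∈ P i → z ∈ Q j → z ∈ S ∧ (Q j).head? = some z) :
    IsLinkage E A B fun i => P i ++ if e i = x then Q i else (Q i).tail := by
  have key : ∀ i j z, z ∈ P i → z ∈ Q j → i = j := by
    intro i j z hzP hzQ
    obtain ⟨hzS, hz⟩ := hPQ i j z hzP hzQ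
    rw [hQe] at hz
    split_ifs at hz with hj
    · exact absurd (Option.some_inj.1 hz ▸ hzS) hyS
    · exact hP.eq_of_mem hzP (List.mem_of_getLast? (Option.some_inj.1 hz ▸ hPe j))
  have mem : ∀ i z, (z ∈ P i ++ if e i = x then Q i else (Q i).tail) → z ∈ P i ∨ z ∈ Q i := by
    intro i z hz
    rw [List.mem_append] at hz
    split_ifs at hz
    · exact hz
    · exact hz.imp_right List.mem_of_mem_tail
  refine ⟨fun i => ?_, fun i j hij z hzi hzj => ?_⟩
  · split_ifs with hx
    · refine (hP.isWalk i).append (hQ.isWalk i) ?_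
      rw [hPe, hQe, if_pos hx]
      rintro _ ⟨⟩ _ ⟨⟩
      rwa [hx]
    · exact (hP.isWalk i).append_tail (hQ.isWalk i) (by rw [hPe, hQe, if_neg hx])
  rcases mem i z hzi with h₁ | h₁ <;> rcases mem j z hzj with h₂ | h₂
  · exact hP.disjoint hij h₁ h₂
  · exact hij (key i j z h₁ h₂)
  · exact hij (key j i z h₂ h₁).symm
  · exact hQ.disjoint hij h₁ h₂

theorem exists_linkage_of_separates_erase (hxy : (x, y) ∈ E)
    (hS : Separates (E.erase (x, y)) A B S) (hyS : y ∉ S) (hk : S.card < k)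
    (hP : IsLinkage (E.filter (·.1 ∉ insert x S)) A (insert x S) P)
    (hQ : IsLinkage (E.filter (·.2 ∉ insert y S)) (insert y S) B Q) :
    ∃ R : Fin k → List V, IsLinkage E A B R := by
  choose e heX he using fun i => (hP.isWalk i).getLast_mem
  have heS : ∀ i, e i ≠ x → e i ∈ S := fun i h => Finset.mem_of_mem_insert_of_ne (heX i) h
  have hmatch : ∀ i, (if e i = x then y else e i) ∈ insert y S := by
    intro i
    split_ifs with h
    · exact Finset.mem_insert_self y S
    · exact Finset.mem_insert_of_mem (heS i h)
  choose j hj using fun i =>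
    hQ.exists_head?_eq ((Finset.card_insert_le y S).trans hk) _ (hmatch i)
  have hj_inj : Function.Injective j := by
    intro i i' h
    have hmatch_eq := Option.some_inj.1 ((hj i).symm.trans (h ▸ hj i'))
    have : e i = e i' := by
      split_ifs at hmatch_eq with h₁ h₂ h₂
      · rw [h₁, h₂]
      · exact absurd (hmatch_eq ▸ heS i' h₂) hyS
      · exact absurd (hmatch_eq.symm ▸ heS i h₁) hyS
      · exact hmatch_eq
    exact hP.eq_of_mem (List.mem_of_getLast? (he i)) (this ▸ List.mem_of_getLast? (he i'))
  refine ⟨_, (hP.mono (Finset.filter_subset _ _)).glue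
    ((hQ.comp hj_inj).mono (Finset.filter_subset _ _)) hxy hyS he hj ?_⟩
  intro i i' z hzP hzQ
  exact hS.mem_of_mem_of_mem (hP.isWalk i) (hQ.isWalk (j i')) hzP hzQ

theorem exists_linkage (E : Finset (V × V)) (A B : Finset V) (k : ℕ)
    (h : ∀ S, Separates E A B S → k ≤ S.card) : ∃ P : Fin k → List V, IsLinkage E A B P := by
  induction E using Finset.strongInduction generalizing A B with
  | H E ih =>
  obtain rfl | ⟨⟨x, y⟩, hxy⟩ := E.eq_empty_or_nonempty
  · exact exists_linkage_of_le_card_inter (h _ separates_empty_inter)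
  by_cases hE : ∀ S, Separates (E.erase (x, y)) A B S → k ≤ S.card
  · obtain ⟨P, hP⟩ := ih _ (Finset.erase_ssubset hxy) A B hE
    exact ⟨P, hP.mono (Finset.erase_subset _ _)⟩
  push Not at hE
  obtain ⟨S, hS, hSk⟩ := hE
  have hyS : y ∉ S := fun hy => by
    have := h _ (hS.insert_of_erase (Or.inr rfl))
    rw [Finset.insert_eq_of_mem hy] at this
    omega
  obtain ⟨P, hP⟩ := ih _ (Finset.filter_ssubset.2 ⟨_, hxy, by simp⟩) A (insert x S)
    fun T hT => h T ((hS.insert_of_erase (Or.inl rfl)).of_filter_fst hT)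
  obtain ⟨Q, hQ⟩ := ih _ (Finset.filter_ssubset.2 ⟨_, hxy, by simp⟩) (insert y S) B
    fun T hT => h T ((hS.insert_of_erase (Or.inr rfl)).of_filter_snd hT)
  exact exists_linkage_of_separates_erase hxy hS hyS hSk hP hQ

end Menger

namespace SimpleGraph

variable {V : Type*} [Fintype V] {G : SimpleGraph V} [DecidableRel G.Adj] {u v : V}

def arcFinset (G : SimpleGraph V) [DecidableRel G.Adj] : Finset (V × V) :=
  Finset.univ.filter fun e => G.Adj e.1 e.2

@[simp]
theorem mem_arcFinset {e : V × V} : e ∈ G.arcFinset ↔ G.Adj e.1 e.2 := by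
  simp [arcFinset]

theorem Walk.exists_isWalk_neighborFinset (w : G.Walk u v) (huv : u ≠ v) (hna : ¬G.Adj u v) :
    ∃ m, Menger.IsWalk G.arcFinset (G.neighborFinset u) (G.neighborFinset v) m ∧
      u ∉ m ∧ v ∉ m ∧ ∀ z ∈ m, z ∈ w.support := by
  obtain ⟨m, hinf, hum, hvm⟩ := List.exists_cons_append_singleton_infix w.start_mem_support
    (by rw [List.getLast?_eq_some_getLast w.support_ne_nil, w.getLast_support]) huv
  have hc : (u :: (m ++ [v])).IsChain G.Adj := w.isChain_adj_support.infix hinf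
  rcases m with _ | ⟨a, m⟩
  · exact absurd (List.isChain_pair.1 hc) hna
  have hc' := List.isChain_append.1 (List.isChain_cons.1 hc).2
  obtain ⟨b, hb⟩ : ∃ b, (a :: m).getLast? = some b :=
    ⟨_, List.getLast?_eq_some_getLast (List.cons_ne_nil a m)⟩
  refine ⟨a :: m, ⟨hc'.1.imp fun _ _ h => by simpa using h, ⟨a, ?_, rfl⟩, ⟨b, ?_, hb⟩⟩,
    hum, hvm, fun z hz => hinf.subset (.tail _ (List.mem_append_left _ hz))⟩
  · exact (mem_neighborFinset _ _ _).2 (List.isChain_cons_cons.1 hc).1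
  · exact (mem_neighborFinset _ _ _).2 (hc'.2.2 b hb v rfl).symm

theorem le_card_of_separates [DecidableEq V] {p : ℕ} {S : Finset V} (huv : u ≠ v)
    (hna : ¬G.Adj u v) (h : ∀ S : Finset V, S.card ≤ p - 1 → u ∉ S → v ∉ S →
      ∃ w : G.Walk u v, ∀ x ∈ w.support, x ∉ S)
    (hS : Menger.Separates G.arcFinset (G.neighborFinset u) (G.neighborFinset v) S) :
    p ≤ S.card := by
  by_contra! hSp
  have hcard := (Finset.card_erase_le (s := S.erase u) (a := v)).trans
    (Finset.card_erase_le (s := S) (a := u))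
  obtain ⟨w, hw⟩ := h ((S.erase u).erase v) (by omega) (by simp) (by simp)
  obtain ⟨l, hl, hul, hvl, hlw⟩ := w.exists_isWalk_neighborFinset huv hna
  obtain ⟨s, hs, hsl⟩ := hS l hl
  exact hw s (hlw s hsl)
    (by simp [hs, ne_of_mem_of_not_mem hsl hul, ne_of_mem_of_not_mem hsl hvl])

theorem exists_walk_support_eq {m : List V}
    (hm : Menger.IsWalk G.arcFinset (G.neighborFinset u) (G.neighborFinset v) m) :
    ∃ w : G.Walk u v, w.support = u :: (m ++ [v]) := by
  obtain ⟨a, ha, hma⟩ := hm.head_mem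
  obtain ⟨b, hb, hmb⟩ := hm.getLast_mem
  have hc : (u :: (m ++ [v])).IsChain G.Adj := by
    refine List.IsChain.cons ((hm.isChain.imp fun _ _ h => by simpa using h).append
      (.singleton v) ?_) ?_
    · rw [hmb]
      rintro _ ⟨⟩ _ ⟨⟩
      exact ((mem_neighborFinset _ _ _).1 hb).symm
    · simp only [List.head?_append, hma, Option.some_or]
      rintro _ ⟨⟩
      exact (mem_neighborFinset _ _ _).1 ha
  exact ⟨(Walk.ofSupport _ (List.cons_ne_nil _ _) hc).copy rfl (by simp),
    (Walk.support_copy _ _ _).trans (Walk.support_ofSupport _ _)⟩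

end SimpleGraph

theorem menger_vertex_general {V : Type*} [Fintype V] [DecidableEq V] (P : SimpleGraph V)
    (u v : V) (huv : u ≠ v) (hna : ¬P.Adj u v) (p : ℕ)
    (h : ∀ S : Finset V, S.card ≤ p - 1 → u ∉ S → v ∉ S →
      ∃ w : P.Walk u v, ∀ x ∈ w.support, x ∉ S) :
    ∃ Q : Fin p → P.Walk u v, IsMultipath Q := by
  classical
  obtain ⟨m, hm⟩ := Menger.exists_linkage P.arcFinset (P.neighborFinset u) (P.neighborFinset v)
    p fun _ hS => P.le_card_of_separates huv hna h hS
  choose w hw using fun i => P.exists_walk_support_eq (hm.isWalk i)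
  refine ⟨fun i => (w i).bypass, fun i => (w i).bypass_isPath, fun i j hij z hzi hzj => ?_⟩
  have hzi := hw i ▸ (w i).support_bypass_subset_support hzi
  have hzj := hw j ▸ (w j).support_bypass_subset_support hzj
  simp only [List.mem_cons, List.mem_append, List.mem_nil_iff, or_false] at hzi hzj
  rcases hzi with rfl | hzi | rfl
  · exact Or.inl rfl
  · rcases hzj with rfl | hzj | rfl
    · exact Or.inl rfl
    · exact (hm.disjoint hij hzi hzj).elim
    · exact Or.inr rfl
  · exact Or.inr rfl

/-- Menger. If `u` and `v` are non-adjacent and no set of at most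
`p-1` vertices (excluding `u,v`) separates them, then there are `p` pairwise internally
vertex-disjoint `u`-`v` paths. -/
theorem menger_vertex {V : Type*} [Fintype V] [DecidableEq V] (P : SimpleGraph V)
    (u v : V) (huv : u ≠ v) (hna : ¬P.Adj u v) (p : ℕ) (hp : 1 ≤ p)
    (h : ∀ S : Finset V, S.card ≤ p - 1 → u ∉ S → v ∉ S →
      ∃ w : P.Walk u v, ∀ x ∈ w.support, x ∉ S) :
    ∃ Q : Fin p → P.Walk u v, IsMultipath Q :=
  menger_vertex_general P u v huv hna p h
end

section
/- Let T be a subgraph of a graph G, uv an edge contained in T, and a, b two vertices of T distinct from u and v, such that T contains an elementary cycle through uv and a of cost δ²_T(uv,a) and an elementary cycle through uv and b of cost δ²_T(uv,b). Then G contains two internally vertex-disjoint a-b paths whose total cost is at most δ²_T(uv,a) + δ²_T(uv,b) − ω(uv), i.e., δ²_G(a,b) ≤ δ²_T(uv,a) + δ²_T(uv,b) − ω(uv). -/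
/-!
If `b` lies on the cycle through `a` (or `a` on the one through `b`), splitting that cycle
at the other vertex already gives the two paths. Otherwise, deleting the edge `uv` from the
cycle through `a` leaves a fork at `a` with prongs ending in `u` and `v`; both ends lie on
the cycle through `b`. Cut each prong where it first meets that cycle, at `x` and `y`, and
continue from `x` and `y` to `b` along the two arcs of that cycle that avoid each other.
The prongs cost at most `δ²_T(uv,a) - ω(uv)` together, the arcs at most `δ²_T(uv,b)`.
-/

open SimpleGraph Walk

section

variable {V : Type*} {G : SimpleGraph V} {ω : Sym2 V → ℝ}

lemma wcost_append {x y z : V} (p : G.Walk x y) (q : G.Walk y z) :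
    wcost ω (p.append q) = wcost ω p + wcost ω q := by
  simp [wcost]

lemma wcost_reverse {x y : V} (p : G.Walk x y) : wcost ω p.reverse = wcost ω p := by
  simp [wcost, List.sum_reverse]

lemma wcost_mapLe {H : SimpleGraph V} (h : G ≤ H) {x y : V} (p : G.Walk x y) :
    wcost ω (p.mapLe h) = wcost ω p := by
  simp [wcost]

lemma wcost_eq_add_of_perm {x y x' y' x'' y'' : V} {p : G.Walk x y} {q : G.Walk x' y'}
    {r : G.Walk x'' y''} (h : p.edges.Perm (q.edges ++ r.edges)) :
    wcost ω p = wcost ω q + wcost ω r := by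
  simp [wcost, (h.map ω).sum_eq]

lemma wcost_nonneg (hω : ∀ e ∈ G.edgeSet, 0 ≤ ω e) {x y : V} (p : G.Walk x y) :
    0 ≤ wcost ω p :=
  List.sum_nonneg fun _ hr ↦ by
    obtain ⟨e, he, rfl⟩ := List.mem_map.mp hr
    exact hω e (p.edges_subset_edgeSet he)

lemma le_wcost_of_mem_edges (hω : ∀ e ∈ G.edgeSet, 0 ≤ ω e) {x y : V} (p : G.Walk x y)
    {e : Sym2 V} (he : e ∈ p.edges) : ω e ≤ wcost ω p :=
  List.single_le_sum (fun _ hr ↦ by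
    obtain ⟨e', he', rfl⟩ := List.mem_map.mp hr
    exact hω e' (p.edges_subset_edgeSet he')) _ (List.mem_map_of_mem he)

lemma InternallyDisjoint.symm {x y : V} {p q : G.Walk x y} (h : InternallyDisjoint p q) :
    InternallyDisjoint q p :=
  fun z hq hp ↦ h z hp hq

lemma InternallyDisjoint.reverse {x y : V} {p q : G.Walk x y} (h : InternallyDisjoint p q) :
    InternallyDisjoint p.reverse q.reverse := by
  intro z hp hq
  rw [support_reverse, List.mem_reverse] at hp hq
  exact (h z hp hq).symm

lemma InternallyDisjoint.exists_fork {b x y : V} {p q : G.Walk b x}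
    (hpq : InternallyDisjoint p q) (hq : q.IsPath) (hy : y ∈ q.support) (hyx : y ≠ x) :
    ∃ (q' : G.Walk b y) (r : G.Walk y x), q'.append r = q ∧ q'.IsPath ∧
      ∀ z ∈ p.support, z ∈ q'.support → z = b := by
  classical
  refine ⟨q.takeUntil y hy, q.dropUntil y hy, take_spec q hy, hq.takeUntil hy,
    fun z hzp hzq ↦ (hpq z hzp (q.support_takeUntil_subset_support hy hzq)).resolve_right ?_⟩
  rintro rfl
  exact endpoint_notMem_support_takeUntil hq hy hyx.symm hzq

namespace SimpleGraph.Walk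

lemma IsPath.append {u v w : V} {p : G.Walk u v} {q : G.Walk v w} (hp : p.IsPath)
    (hq : q.IsPath) (h : ∀ z ∈ p.support, z ∈ q.support → z = v) : (p.append q).IsPath := by
  refine IsPath.mk' ?_
  rw [support_append, List.nodup_append]
  refine ⟨hp.support_nodup, hq.support_nodup.tail, fun z hzp z' hzq hzz ↦ ?_⟩
  subst hzz
  have hvq : v ∉ q.support.tail := by
    have hnd := hq.support_nodup
    rw [← q.cons_tail_support] at hnd
    exact (List.nodup_cons.mp hnd).1
  exact hvq (h z hzp (List.mem_of_mem_tail hzq) ▸ hzq)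

lemma exists_append_eq_first_mem {s t : V} (p : G.Walk s t) (S : Set V) (ht : t ∈ S) :
    ∃ x ∈ S, ∃ (A : G.Walk s x) (B : G.Walk x t),
      A.append B = p ∧ ∀ z ∈ A.support, z ∈ S → z = x := by
  induction p with
  | nil => exact ⟨_, ht, nil, nil, rfl, fun z hz _ ↦ by simpa using hz⟩
  | @cons s w t h p ih =>
    by_cases hs : s ∈ S
    · exact ⟨s, hs, nil, cons h p, rfl, fun z hz _ ↦ by simpa using hz⟩
    · obtain ⟨x, hx, A, B, rfl, hA⟩ := ih ht
      refine ⟨x, hx, cons h A, B, rfl, fun z hz hzS ↦ ?_⟩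
      rcases List.mem_cons.mp (support_cons h A ▸ hz) with rfl | hz
      · exact absurd hzS hs
      · exact hA z hz hzS

lemma IsCycle.isPath_dropUntil [DecidableEq V] {s t : V} {c : G.Walk s s} (hc : c.IsCycle)
    (ht : t ∈ c.support) (hts : t ≠ s) : (c.dropUntil t ht).IsPath := by
  rw [← take_spec c ht] at hc
  exact hc.isPath_of_append_right (not_nil_of_ne hts.symm)

lemma IsCycle.eq_or_eq_of_mem_takeUntil_of_mem_dropUntil [DecidableEq V] {s t z : V}
    {c : G.Walk s s} (hc : c.IsCycle) (ht : t ∈ c.support)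
    (hz₁ : z ∈ (c.takeUntil t ht).support) (hz₂ : z ∈ (c.dropUntil t ht).support) :
    z = s ∨ z = t := by
  by_contra! hz
  have hnd := hc.support_nodup
  rw [← take_spec c ht, tail_support_append] at hnd
  exact List.disjoint_of_nodup_append hnd (((mem_support_iff _).mp hz₁).resolve_left hz.1)
    (((mem_support_iff _).mp hz₂).resolve_left hz.2)

theorem IsCycle.exists_internallyDisjoint {s t : V} {c : G.Walk s s} (hc : c.IsCycle)
    (ht : t ∈ c.support) (hts : t ≠ s) :
    ∃ p q : G.Walk s t, p.IsPath ∧ q.IsPath ∧ InternallyDisjoint p q ∧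
      c.edges.Perm (p.edges ++ q.edges) ∧ ∀ z, z ∈ c.support ↔ z ∈ p.support ∨ z ∈ q.support := by
  classical
  refine ⟨c.takeUntil t ht, (c.dropUntil t ht).reverse, hc.isPath_takeUntil ht,
    (hc.isPath_dropUntil ht hts).reverse, fun z hz₁ hz₂ ↦ ?_, ?_, fun z ↦ ?_⟩
  · rw [support_reverse, List.mem_reverse] at hz₂
    exact hc.eq_or_eq_of_mem_takeUntil_of_mem_dropUntil ht hz₁ hz₂
  · rw [edges_reverse]
    have hsplit : c.edges = (c.takeUntil t ht).edges ++ (c.dropUntil t ht).edges := by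
      rw [← edges_append, take_spec]
    exact hsplit ▸ (List.reverse_perm _).symm.append_left _
  · rw [support_reverse, List.mem_reverse, ← mem_support_append_iff, take_spec]

theorem IsCycle.exists_fork {b x y : V} {c : G.Walk b b} (hc : c.IsCycle)
    (hx : x ∈ c.support) (hy : y ∈ c.support) (hxb : x ≠ b) (hxy : x ≠ y) :
    ∃ (p : G.Walk b x) (q : G.Walk b y) (r : G.Walk y x), p.IsPath ∧ q.IsPath ∧
      (∀ z ∈ p.support, z ∈ q.support → z = b) ∧ p.support ⊆ c.support ∧
      q.support ⊆ c.support ∧ c.edges.Perm (p.edges ++ (q.append r).edges) := by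
  obtain ⟨P, Q, hP, hQ, hPQ, hperm, hsupp⟩ := hc.exists_internallyDisjoint hx hxb
  wlog hyQ : y ∈ Q.support generalizing P Q
  · exact this Q P hQ hP hPQ.symm (hperm.trans List.perm_append_comm)
      (fun z ↦ (hsupp z).trans or_comm) (((hsupp y).mp hy).resolve_right hyQ)
  obtain ⟨q, r, rfl, hq, hPq⟩ := hPQ.exists_fork hQ hyQ hxy.symm
  refine ⟨P, q, r, hP, hq, hPq, fun z hz ↦ (hsupp z).mpr (Or.inl hz),
    fun z hz ↦ (hsupp z).mpr (Or.inr ?_), hperm⟩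
  rw [mem_support_append_iff]
  exact Or.inl hz

theorem IsCycle.exists_fork_of_mem_edges (hω : ∀ e ∈ G.edgeSet, 0 ≤ ω e)
    {a u v : V} {c : G.Walk a a} (hc : c.IsCycle) (he : s(u, v) ∈ c.edges) (hau : a ≠ u)
    (hav : a ≠ v) :
    ∃ (p : G.Walk a u) (q : G.Walk a v), p.IsPath ∧ q.IsPath ∧
      (∀ z ∈ p.support, z ∈ q.support → z = a) ∧ p.support ⊆ c.support ∧
      q.support ⊆ c.support ∧ wcost ω p + wcost ω q + ω s(u, v) ≤ wcost ω c := by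
  obtain ⟨p, q, r, hp, hq, hpq, hpc, hqc, hperm⟩ :=
    hc.exists_fork (c.fst_mem_support_of_mem_edges he) (c.snd_mem_support_of_mem_edges he)
      hau.symm (c.adj_of_mem_edges he).ne
  -- `uv` cannot lie on a prong: its far end would then be on both prongs.
  have her : s(u, v) ∈ r.edges := by
    have he' := hperm.subset he
    simp only [edges_append, List.mem_append] at he'
    rcases he' with h | h | h
    · exact absurd (hpq v (p.snd_mem_support_of_mem_edges h) q.end_mem_support) hav.symm
    · exact absurd (hpq u p.end_mem_support (q.fst_mem_support_of_mem_edges h)) hau.symm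
    · exact h
  refine ⟨p, q, hp, hq, hpq, hpc, hqc, ?_⟩
  rw [wcost_eq_add_of_perm hperm, wcost_append]
  linarith [le_wcost_of_mem_edges hω r her]

end SimpleGraph.Walk

lemma internallyDisjoint_append_reverse {a b x y : V} {A₁ : G.Walk a x} {A₂ : G.Walk a y}
    {B₁ : G.Walk b x} {B₂ : G.Walk b y} (hA : ∀ z ∈ A₁.support, z ∈ A₂.support → z = a)
    (hB : ∀ z ∈ B₁.support, z ∈ B₂.support → z = b)
    (h₁ : ∀ z ∈ A₁.support, z ∈ B₂.support → z = x)
    (h₂ : ∀ z ∈ A₂.support, z ∈ B₁.support → z = y) (hxb : x ≠ b) (hyb : y ≠ b) :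
    InternallyDisjoint (A₁.append B₁.reverse) (A₂.append B₂.reverse) := by
  intro z hz₁ hz₂
  simp only [mem_support_append_iff, support_reverse, List.mem_reverse] at hz₁ hz₂
  rcases hz₁ with hz₁ | hz₁ <;> rcases hz₂ with hz₂ | hz₂
  · exact Or.inl (hA z hz₁ hz₂)
  · obtain rfl := h₁ z hz₁ hz₂
    exact absurd (hB z B₁.end_mem_support hz₂) hxb
  · obtain rfl := h₂ z hz₂ hz₁
    exact absurd (hB z hz₁ B₂.end_mem_support) hyb
  · exact Or.inr (hB z hz₁ hz₂)

theorem exists_internallyDisjoint_paths_of_notMem_support (hω : ∀ e ∈ G.edgeSet, 0 ≤ ω e)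
    {u v a b : V} {ca : G.Walk a a} (hca : ca.IsCycle) (hcae : s(u, v) ∈ ca.edges)
    {cb : G.Walk b b} (hcb : cb.IsCycle) (hcbe : s(u, v) ∈ cb.edges)
    (hacb : a ∉ cb.support) (hbca : b ∉ ca.support) :
    ∃ p q : G.Walk a b, p.IsPath ∧ q.IsPath ∧ InternallyDisjoint p q ∧
      wcost ω p + wcost ω q ≤ wcost ω ca + wcost ω cb - ω s(u, v) := by
  have hucb : u ∈ cb.support := cb.fst_mem_support_of_mem_edges hcbe
  have hvcb : v ∈ cb.support := cb.snd_mem_support_of_mem_edges hcbe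
  obtain ⟨p₁, q₁, hp₁, hq₁, hpq₁, hp₁ca, hq₁ca, hcost₁⟩ := hca.exists_fork_of_mem_edges hω hcae
    (by rintro rfl; exact hacb hucb) (by rintro rfl; exact hacb hvcb)
  obtain ⟨x, hx, A₁, B₁, rfl, hA₁⟩ := p₁.exists_append_eq_first_mem {z | z ∈ cb.support} hucb
  obtain ⟨y, hy, A₂, B₂, rfl, hA₂⟩ := q₁.exists_append_eq_first_mem {z | z ∈ cb.support} hvcb
  have hA₁p₁ : A₁.support ⊆ (A₁.append B₁).support := fun z hz ↦
    (mem_support_append_iff _ _).mpr (Or.inl hz)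
  have hA₂q₁ : A₂.support ⊆ (A₂.append B₂).support := fun z hz ↦
    (mem_support_append_iff _ _).mpr (Or.inl hz)
  have hxy : x ≠ y := by
    rintro rfl
    obtain rfl := hpq₁ x (hA₁p₁ A₁.end_mem_support) (hA₂q₁ A₂.end_mem_support)
    exact hacb hx
  have hxb : x ≠ b := by rintro rfl; exact hbca (hp₁ca (hA₁p₁ A₁.end_mem_support))
  have hyb : y ≠ b := by rintro rfl; exact hbca (hq₁ca (hA₂q₁ A₂.end_mem_support))
  obtain ⟨p₂, q₂, r₂, hp₂, hq₂, hpq₂, hp₂cb, hq₂cb, hperm₂⟩ := hcb.exists_fork hx hy hxb hxy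
  refine ⟨A₁.append p₂.reverse, A₂.append q₂.reverse,
    hp₁.of_append_left.append hp₂.reverse fun z hz hz' ↦ hA₁ z hz (hp₂cb (by simpa using hz')),
    hq₁.of_append_left.append hq₂.reverse fun z hz hz' ↦ hA₂ z hz (hq₂cb (by simpa using hz')),
    internallyDisjoint_append_reverse (fun z hz hz' ↦ hpq₁ z (hA₁p₁ hz) (hA₂q₁ hz')) hpq₂
      (fun z hz hz' ↦ hA₁ z hz (hq₂cb hz')) (fun z hz hz' ↦ hA₂ z hz (hp₂cb hz')) hxb hyb, ?_⟩
  have hcost₂ := wcost_eq_add_of_perm (ω := ω) hperm₂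
  simp only [wcost_append, wcost_reverse] at hcost₁ hcost₂ ⊢
  linarith [wcost_nonneg hω B₁, wcost_nonneg hω B₂, wcost_nonneg hω r₂]

theorem exists_internallyDisjoint_paths_of_isCycle (hω : ∀ e ∈ G.edgeSet, 0 ≤ ω e)
    {u v a b : V} (hab : a ≠ b) {ca : G.Walk a a} (hca : ca.IsCycle)
    (hcae : s(u, v) ∈ ca.edges) {cb : G.Walk b b} (hcb : cb.IsCycle)
    (hcbe : s(u, v) ∈ cb.edges) :
    ∃ p q : G.Walk a b, p.IsPath ∧ q.IsPath ∧ InternallyDisjoint p q ∧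
      wcost ω p + wcost ω q ≤ wcost ω ca + wcost ω cb - ω s(u, v) := by
  have hca_uv := le_wcost_of_mem_edges hω ca hcae
  have hcb_uv := le_wcost_of_mem_edges hω cb hcbe
  by_cases hacb : a ∈ cb.support
  · obtain ⟨p, q, hp, hq, hpq, hperm, -⟩ := hcb.exists_internallyDisjoint hacb hab
    refine ⟨p.reverse, q.reverse, hp.reverse, hq.reverse, hpq.reverse, ?_⟩
    rw [wcost_reverse, wcost_reverse, ← wcost_eq_add_of_perm hperm]
    linarith
  by_cases hbca : b ∈ ca.support
  · obtain ⟨p, q, hp, hq, hpq, hperm, -⟩ := hca.exists_internallyDisjoint hbca hab.symm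
    refine ⟨p, q, hp, hq, hpq, ?_⟩
    rw [← wcost_eq_add_of_perm hperm]
    linarith
  exact exists_internallyDisjoint_paths_of_notMem_support hω hca hcae hcb hcbe hacb hbca

end

theorem bipath_triangle_general {V : Type*} (G T : SimpleGraph V) (hT : T ≤ G)
    (ω : Sym2 V → ℝ) (hω : ∀ e ∈ G.edgeSet, 0 < ω e)
    (u v a b : V) (hab : a ≠ b)
    (ca : T.Walk a a) (hca : ca.IsCycle) (hcae : s(u, v) ∈ ca.edges)
    (cb : T.Walk b b) (hcb : cb.IsCycle) (hcbe : s(u, v) ∈ cb.edges) :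
    ∃ p q : G.Walk a b, p.IsPath ∧ q.IsPath ∧ InternallyDisjoint p q ∧
      wcost ω p + wcost ω q ≤ wcost ω ca + wcost ω cb - ω s(u, v) := by
  rw [← wcost_mapLe hT ca, ← wcost_mapLe hT cb]
  exact exists_internallyDisjoint_paths_of_isCycle (fun e he ↦ (hω e he).le) hab
    ((isCycle_mapLe hT).mpr hca) (by rwa [edges_mapLe_eq_edges])
    ((isCycle_mapLe hT).mpr hcb) (by rwa [edges_mapLe_eq_edges])

/-- triangle-like inequality for the bi-path metric. If `T ⊆ G`
contains an elementary cycle through the edge `uv` and `a`, and one through `uv` and `b`,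
where `a, b ∉ {u,v}`, then `G` contains a 2-multipath between `a` and `b` of cost at most
the sum of the costs of the two cycles minus `ω(uv)`. -/
theorem bipath_triangle {V : Type*} [Fintype V] (G T : SimpleGraph V) (hT : T ≤ G)
    (ω : Sym2 V → ℝ) (hω : ∀ e ∈ G.edgeSet, 0 < ω e)
    (u v a b : V) (huv : T.Adj u v)
    (hau : a ≠ u) (hav : a ≠ v) (hbu : b ≠ u) (hbv : b ≠ v) (hab : a ≠ b)
    (ca : T.Walk a a) (hca : ca.IsCycle) (hcae : s(u, v) ∈ ca.edges)
    (cb : T.Walk b b) (hcb : cb.IsCycle) (hcbe : s(u, v) ∈ cb.edges) :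
    ∃ p q : G.Walk a b, p.IsPath ∧ q.IsPath ∧ InternallyDisjoint p q ∧
      wcost ω p + wcost ω q ≤ wcost ω ca + wcost ω cb - ω s(u, v) :=
  bipath_triangle_general G T hT ω hω u v a b hab ca hca hcae cb hcb hcbe
end

section
/- Let P_G be a union of p internally vertex-disjoint paths from x to y in a graph G, and suppose for each edge uv of P_G we have a subgraph Q_uv of a graph H that is a union of p internally vertex-disjoint u-v paths (with Q_uv = {uv} allowed when uv ∈ H). Then in the subgraph P_H = ⋃_{uv ∈ E(P_G)} Q_uv, no set S of at most p−1 vertices (excluding x and y) disconnects x from y. -/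
/-!
Pigeonhole: the `p` paths of a multipath have pairwise disjoint interiors, so a set of
fewer than `p` inner vertices misses one of them entirely. Hence some path `P i` of the
outer multipath avoids `S`, and for each of its edges `uv` (whose ends avoid `S`) some
path of `Q_uv` avoids `S`; concatenating these along `P i` gives the required walk.
-/

namespace SimpleGraph

variable {V : Type*} {G H : SimpleGraph V}

lemma exists_forall_support_notMem_of_pairwise_internallyDisjoint {ι : Type*} [Fintype ι]
    {u v : V} (R : ι → G.Walk u v) (hR : Pairwise fun i j ↦ InternallyDisjoint (R i) (R j))
    (S : Finset V) (hS : S.card < Fintype.card ι) (hu : u ∉ S) (hv : v ∉ S) :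
    ∃ k, ∀ z ∈ (R k).support, z ∉ S := by
  by_contra! hhit
  choose f hf_support hf_mem using hhit
  have hf_inj : Function.Injective f := by
    intro i j hij
    by_contra hne
    rcases hR hne (f i) (hf_support i) (hij ▸ hf_support j) with h | h
    · exact hu (h ▸ hf_mem i)
    · exact hv (h ▸ hf_mem i)
  have := Finset.card_le_card_of_injOn f (fun i _ ↦ hf_mem i) hf_inj.injOn (s := Finset.univ)
  rw [Finset.card_univ] at this
  omega

lemma Walk.exists_walk_avoiding_of_forall_dart {S : Set V} :
    ∀ {a b : V} (w : G.Walk a b),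
      (∀ d ∈ w.darts, ∃ q : H.Walk d.fst d.snd, ∀ z ∈ q.support, z ∉ S) →
      (∀ z ∈ w.support, z ∉ S) →
      ∃ q : H.Walk a b, ∀ z ∈ q.support, z ∉ S
  | _, _, .nil, _, hw => ⟨.nil, by simpa using hw⟩
  | _, _, .cons h w, hdarts, hw => by
    obtain ⟨q₁, hq₁⟩ := hdarts ⟨(_, _), h⟩ (by simp)
    obtain ⟨q₂, hq₂⟩ := exists_walk_avoiding_of_forall_dart w
      (fun d hd ↦ hdarts d (by simp [hd])) (fun z hz ↦ hw z (by simp [hz]))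
    refine ⟨q₁.append q₂, fun z hz ↦ ?_⟩
    rcases (Walk.mem_support_append_iff _ _).mp hz with hz | hz
    exacts [hq₁ z hz, hq₂ z hz]

end SimpleGraph

open SimpleGraph in
theorem union_multipath_connectivity_general {V : Type*}
    (G H : SimpleGraph V) (x y : V) (p : ℕ) (hp : 1 ≤ p)
    (P : Fin p → G.Walk x y) (hP : IsMultipath P)
    (Q : ∀ u v : V, G.Adj u v → Fin p → H.Walk u v)
    (hQ : ∀ (u v : V) (h : G.Adj u v), (∃ j, s(u, v) ∈ (P j).edges) →
      IsMultipath (Q u v h)) :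
    ∀ S : Finset V, S.card ≤ p - 1 → x ∉ S → y ∉ S →
      ∃ w : H.Walk x y, ∀ z ∈ w.support, z ∉ S := by
  intro S hS hx hy
  have hS_lt : S.card < Fintype.card (Fin p) := by rw [Fintype.card_fin]; omega
  obtain ⟨i, hi⟩ :=
    exists_forall_support_notMem_of_pairwise_internallyDisjoint P hP.2 S hS_lt hx hy
  refine (P i).exists_walk_avoiding_of_forall_dart (fun d hd ↦ ?_) hi
  have hQd : IsMultipath (Q _ _ d.adj) := hQ _ _ d.adj ⟨i, List.mem_map_of_mem hd⟩
  obtain ⟨k, hk⟩ := exists_forall_support_notMem_of_pairwise_internallyDisjoint _ hQd.2 S hS_lt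
    (hi _ ((P i).dart_fst_mem_support_of_mem_darts hd))
    (hi _ ((P i).dart_snd_mem_support_of_mem_darts hd))
  exact ⟨_, hk⟩

/-- connectivity lemma. Let `P` be a `p`-multipath from `x` to `y` in
`G`, and for each edge `uv` occurring in `P`, let `Q u v _ : Fin p → H.Walk u v` be a
`p`-multipath between `u` and `v` in the graph `H`, where every edge of `H` comes from
one of these multipaths (`H` is the union `P_H` of the `Q_uv`). Then no set `S` of at
most `p-1` vertices (excluding `x` and `y`) disconnects `x` from `y` in `H`. -/
theorem union_multipath_connectivity {V : Type*} [Fintype V] [DecidableEq V]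
    (G H : SimpleGraph V) (x y : V) (hxy : x ≠ y) (p : ℕ) (hp : 1 ≤ p)
    (P : Fin p → G.Walk x y) (hP : IsMultipath P)
    (Q : ∀ u v : V, G.Adj u v → Fin p → H.Walk u v)
    (hQ : ∀ (u v : V) (h : G.Adj u v), (∃ j, s(u, v) ∈ (P j).edges) →
      IsMultipath (Q u v h))
    (hunion : ∀ e ∈ H.edgeSet, ∃ (u v : V) (h : G.Adj u v) (i : Fin p),
      (∃ j, s(u, v) ∈ (P j).edges) ∧ e ∈ (Q u v h i).edges) :
    ∀ S : Finset V, S.card ≤ p - 1 → x ∉ S → y ∉ S →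
      ∃ w : H.Walk x y, ∀ z ∈ w.support, z ∉ S :=
  union_multipath_connectivity_general G H x y p hp P hP Q hQ
end

section
/- For s = 3, the minimum number of vertices whose removal destroys all u-v paths with at most 3 edges equals the maximum number of internally vertex-disjoint u-v paths each having at most 3 edges, for any two non-adjacent vertices u, v in a finite graph. -/
/-!
A `u`-`v` path with at most three edges is `u - a - b - v` or `u - c - v`; write the latter as
`u - c - c - v`. Relate `c ~ c` for every common neighbour `c` of `u` and `v`, and `a ~ b` for
every edge from `N(u) \ N(v)` to `N(v) \ N(u)`. A vertex cover of this bipartite relation meets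
every short path. Since an edge `a ~ b` with `a ≠ b` avoids all common neighbours, the short paths
given by a matching are internally disjoint. König's theorem, derived from Hall's theorem with
deficiency, provides a cover no larger than a matching.
-/

open Finset

theorem exists_matching_of_card_le_card_biUnion_add {ι β : Type*} [Fintype ι] [DecidableEq β]
    (t : ι → Finset β) (d : ℕ) (h : ∀ s : Finset ι, #s ≤ #(s.biUnion t) + d) :
    ∃ M : Finset (ι × β), (∀ p ∈ M, p.2 ∈ t p.1) ∧ Set.InjOn Prod.fst (M : Set (ι × β)) ∧
      Set.InjOn Prod.snd (M : Set (ι × β)) ∧ Fintype.card ι ≤ #M + d := by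
  classical
  -- `d` extra vertices adjacent to every `i` absorb the deficiency.
  set t' : ι → Finset (β ⊕ Fin d) := fun i => (t i).disjSum univ
  have hall : ∀ s : Finset ι, #s ≤ #(s.biUnion t') := by
    intro s
    obtain rfl | ⟨i, hi⟩ := s.eq_empty_or_nonempty
    · simp
    calc #s ≤ #((s.biUnion t).disjSum (univ : Finset (Fin d))) := by simpa using h s
      _ ≤ #(s.biUnion t') := card_le_card fun z hz => ?_
    rcases z with b | j
    · obtain ⟨k, hk, hb⟩ := mem_biUnion.1 (inl_mem_disjSum.1 hz)
      exact mem_biUnion.2 ⟨k, hk, inl_mem_disjSum.2 hb⟩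
    · exact mem_biUnion.2 ⟨i, hi, inr_mem_disjSum.2 (mem_univ j)⟩
  obtain ⟨g, hg, hgt⟩ := (all_card_le_biUnion_card_iff_exists_injective t').1 hall
  set M := (univ ×ˢ univ.biUnion t).filter fun p => g p.1 = .inl p.2
  have hgM : ∀ i b, g i = .inl b → (i, b) ∈ M := fun i b hib => by
    have hb : b ∈ t i := inl_mem_disjSum.1 (hib ▸ hgt i)
    exact mem_filter.2 ⟨mem_product.2 ⟨mem_univ i, mem_biUnion.2 ⟨i, mem_univ i, hb⟩⟩, hib⟩
  have hMg : ∀ p ∈ M, g p.1 = .inl p.2 := fun p hp => (mem_filter.1 hp).2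
  refine ⟨M, fun p hp => inl_mem_disjSum.1 (hMg p hp ▸ hgt p.1), ?_, ?_, ?_⟩
  · intro p hp q hq hpq
    exact Prod.ext hpq (Sum.inl_injective ((hMg p hp).symm.trans (hpq ▸ hMg q hq)))
  · intro p hp q hq hpq
    exact Prod.ext (hg ((hMg p hp).trans (hpq ▸ (hMg q hq).symm))) hpq
  · calc Fintype.card ι ≤ #((M.image Prod.snd).disjSum (univ : Finset (Fin d))) := by
          refine card_le_card_of_injOn g (fun i _ => ?_) hg.injOn
          rcases hgi : g i with b | j
          · exact inl_mem_disjSum.2 (mem_image.2 ⟨(i, b), hgM i b hgi, rfl⟩)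
          · exact inr_mem_disjSum.2 (mem_univ j)
      _ ≤ #M + d := by simpa using card_image_le

theorem exists_cover_card_le_matching_card {α β : Type*} [Fintype α] [Fintype β]
    [DecidableEq α] [DecidableEq β] (R : α → β → Prop) [DecidableRel R] :
    ∃ (A : Finset α) (B : Finset β) (M : Finset (α × β)),
      (∀ a b, R a b → a ∈ A ∨ b ∈ B) ∧ (∀ p ∈ M, R p.1 p.2) ∧
      Set.InjOn Prod.fst (M : Set (α × β)) ∧ Set.InjOn Prod.snd (M : Set (α × β)) ∧
      #A + #B ≤ #M := by
  set N : α → Finset β := fun a => univ.filter (R a)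
  -- A set `W` minimising `#Wᶜ + #N(W)` gives the cover `Wᶜ ∪ N(W)`; by minimality every `s`
  -- has deficiency `#s - #N(s)` at most `#W - #N(W)`.
  obtain ⟨W, -, hW⟩ := exists_min_image (univ : Finset (Finset α))
    (fun W => #Wᶜ + #(W.biUnion N)) univ_nonempty
  have hWcard : #Wᶜ + #(W.biUnion N) ≤ Fintype.card α := by simpa using hW ∅ (mem_univ _)
  obtain ⟨M, hMN, hfst, hsnd, hMcard⟩ := exists_matching_of_card_le_card_biUnion_add N
    (Fintype.card α - (#Wᶜ + #(W.biUnion N))) fun s => by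
      have := hW s (mem_univ s)
      have := card_compl_add_card s
      omega
  refine ⟨Wᶜ, W.biUnion N, M, fun a b hab => ?_, fun p hp => (mem_filter.1 (hMN p hp)).2,
    hfst, hsnd, by omega⟩
  by_cases ha : a ∈ W
  · exact .inr (mem_biUnion.2 ⟨a, ha, mem_filter.2 ⟨mem_univ b, hab⟩⟩)
  · exact .inl (mem_compl.2 ha)

theorem Nat.sInf_eq_sSup_of_forall_le {A B : Set ℕ} {a b : ℕ} (ha : a ∈ A) (hb : b ∈ B)
    (hab : a ≤ b) (h : ∀ a ∈ A, ∀ b ∈ B, b ≤ a) : sInf A = sSup B :=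
  le_antisymm ((Nat.sInf_le ha).trans (hab.trans (le_csSup ⟨a, fun b hb => h a ha b hb⟩ hb)))
    (csSup_le ⟨b, hb⟩ fun b hb => le_csInf ⟨a, ha⟩ fun a ha => h a ha b hb)

namespace SimpleGraph

variable {V : Type*} (G : SimpleGraph V)

def IsShortPathCut (u v : V) (s : ℕ) (S : Finset V) : Prop :=
  u ∉ S ∧ v ∉ S ∧ ∀ w : G.Walk u v, w.IsPath → w.length ≤ s → ∃ x ∈ w.support, x ∈ S

def IsShortPathFamily {u v : V} (s : ℕ) {m : ℕ} (Q : Fin m → G.Walk u v) : Prop :=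
  (∀ i, (Q i).IsPath ∧ (Q i).length ≤ s) ∧ ∀ i j, i ≠ j → InternallyDisjoint (Q i) (Q j)

variable {G}

theorem IsShortPathFamily.card_le {u v : V} {s m : ℕ} {Q : Fin m → G.Walk u v} {S : Finset V}
    (hQ : G.IsShortPathFamily s Q) (hS : G.IsShortPathCut u v s S) : m ≤ #S := by
  obtain ⟨huS, hvS, hcut⟩ := hS
  choose x hxQ hxS using fun i => hcut (Q i) (hQ.1 i).1 (hQ.1 i).2
  have hx : Function.Injective x := fun i j hij => by
    by_contra hne
    rcases hQ.2 i j hne (x i) (hxQ i) (hij ▸ hxQ j) with h | h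
    exacts [huS (h ▸ hxS i), hvS (h ▸ hxS i)]
  simpa using card_le_card_of_injOn (s := univ) x (fun i _ => hxS i) hx.injOn

variable (G) in
/-- `u - a - b - v` is a walk; `a = b` stands for the walk `u - a - v`. -/
def IsShortRoute (u v a b : V) : Prop :=
  G.Adj u a ∧ (a = b ∨ G.Adj a b) ∧ G.Adj b v

theorem Walk.exists_isShortRoute_of_length_le_three {u v : V} (huv : u ≠ v)
    (hna : ¬G.Adj u v) (w : G.Walk u v) (hw : w.length ≤ 3) :
    ∃ a ∈ w.support, ∃ b ∈ w.support, G.IsShortRoute u v a b := by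
  match w, hw with
  | .nil, _ => exact absurd rfl huv
  | .cons h .nil, _ => exact absurd h hna
  | .cons h₁ (.cons h₂ .nil), _ => exact ⟨_, by simp, _, by simp, h₁, .inl rfl, h₂⟩
  | .cons h₁ (.cons h₂ (.cons h₃ .nil)), _ => exact ⟨_, by simp, _, by simp, h₁, .inr h₂, h₃⟩
  | .cons _ (.cons _ (.cons _ (.cons _ _))), hw => simp only [Walk.length_cons] at hw; omega

theorem IsShortRoute.exists_isPath {u v a b : V} (huv : u ≠ v) (hna : ¬G.Adj u v)
    (h : G.IsShortRoute u v a b) :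
    ∃ w : G.Walk u v, w.IsPath ∧ w.length ≤ 3 ∧ w.support ⊆ [u, a, b, v] := by
  obtain ⟨hua, rfl | hab, hbv⟩ := h
  · refine ⟨.cons hua (.cons hbv .nil), ?_, by simp, by simp⟩
    simp [Walk.isPath_def, huv, hua.ne, hbv.ne]
  · have hbu : b ≠ u := by rintro rfl; exact hna hbv
    have hav : a ≠ v := by rintro rfl; exact hna hua
    refine ⟨.cons hua (.cons hab (.cons hbv .nil)), ?_, by simp, by simp⟩
    simp [Walk.isPath_def, huv, hua.ne, hab.ne, hbv.ne, hbu.symm, hav]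

theorem isShortPathCut_three_of_forall_isShortRoute {u v : V} (huv : u ≠ v)
    (hna : ¬G.Adj u v) {S : Finset V} (huS : u ∉ S) (hvS : v ∉ S)
    (hS : ∀ a b, G.IsShortRoute u v a b → a ∈ S ∨ b ∈ S) :
    G.IsShortPathCut u v 3 S := by
  refine ⟨huS, hvS, fun w _ hw => ?_⟩
  obtain ⟨a, ha, b, hb, hab⟩ := w.exists_isShortRoute_of_length_le_three huv hna hw
  rcases hS a b hab with h | h
  exacts [⟨a, ha, h⟩, ⟨b, hb, h⟩]

theorem exists_isShortPathFamily_three_of_pairwise_disjoint [DecidableEq V] {u v : V}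
    (huv : u ≠ v) (hna : ¬G.Adj u v) (M : Finset (V × V)) (hM : ∀ p ∈ M, G.IsShortRoute u v p.1 p.2)
    (hdisj : (M : Set (V × V)).Pairwise fun p q => Disjoint ({p.1, p.2} : Finset V) {q.1, q.2}) :
    ∃ Q : Fin #M → G.Walk u v, G.IsShortPathFamily 3 Q := by
  choose w hpath hlen hsupp using fun p : M => (hM p p.2).exists_isPath huv hna
  set e := M.equivFin.symm
  refine ⟨fun i => w (e i), fun i => ⟨hpath _, hlen _⟩, fun i j hij z hzi hzj => ?_⟩
  have hne : (e i : V × V) ≠ e j := fun h => hij (e.injective (Subtype.ext h))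
  have hdisj_ij : Disjoint _ _ := hdisj (e i).2 (e j).2 hne
  have hzi := hsupp _ hzi
  have hzj := hsupp _ hzj
  simp only [List.mem_cons, List.not_mem_nil, or_false] at hzi hzj
  by_contra! hz
  exact Finset.disjoint_left.1 hdisj_ij (by simp only [mem_insert, mem_singleton]; tauto)
    (by simp only [mem_insert, mem_singleton]; tauto)

theorem exists_isShortRoute_cover_le_disjoint_family [Fintype V] [DecidableEq V] {u v : V}
    (hna : ¬G.Adj u v) :
    ∃ (S : Finset V) (M : Finset (V × V)), u ∉ S ∧ v ∉ S ∧
      (∀ a b, G.IsShortRoute u v a b → a ∈ S ∨ b ∈ S) ∧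
      (∀ p ∈ M, G.IsShortRoute u v p.1 p.2) ∧
      (M : Set (V × V)).Pairwise (fun p q => Disjoint ({p.1, p.2} : Finset V) {q.1, q.2}) ∧
      #S ≤ #M := by
  classical
  set R : V → V → Prop := fun a b =>
    G.Adj u a ∧ G.Adj b v ∧ (a = b ∨ G.Adj a b ∧ ¬G.Adj a v ∧ ¬G.Adj u b)
  have hR_route : ∀ a b, R a b → G.IsShortRoute u v a b := fun a b ⟨hua, hbv, hab⟩ =>
    ⟨hua, hab.imp_right (·.1), hbv⟩
  -- a route through a common neighbour `c` is covered through the edge `c ~ c`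
  have hroute_R : ∀ a b, G.IsShortRoute u v a b → R a a ∨ R b b ∨ R a b := by
    rintro a b ⟨hua, hab, hbv⟩
    by_cases hav : G.Adj a v
    · exact .inl ⟨hua, hav, .inl rfl⟩
    by_cases hub : G.Adj u b
    · exact .inr (.inl ⟨hub, hbv, .inl rfl⟩)
    rcases hab with rfl | hab
    exacts [absurd hbv hav, .inr (.inr ⟨hua, hbv, .inr ⟨hab, hav, hub⟩⟩)]
  have hR_cross : ∀ p q : V × V, R p.1 p.2 → R q.1 q.2 → p.1 = q.2 → q.1 = q.2 :=
    fun p q ⟨hup, _⟩ ⟨_, _, hq⟩ hpq => hq.resolve_right fun h => h.2.2 (hpq ▸ hup)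
  obtain ⟨A, B, M, hcover, hMR, hfst, hsnd, hcard⟩ := exists_cover_card_le_matching_card R
  refine ⟨(A ∪ B).filter (fun z => G.Adj u z ∨ G.Adj z v), M, ?_, ?_, ?_,
    fun p hp => hR_route _ _ (hMR p hp), ?_, ?_⟩
  · simp [hna]
  · simp [hna]
  · intro a b hab
    simp only [mem_filter, mem_union]
    rcases hroute_R a b hab with h | h | h
    · exact .inl ⟨hcover a a h, .inl hab.1⟩
    · exact .inr ⟨hcover b b h, .inr hab.2.2⟩
    · rcases hcover a b h with h | h
      exacts [.inl ⟨.inl h, .inl hab.1⟩, .inr ⟨.inr h, .inr hab.2.2⟩]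
  · intro p hp q hq hpq
    have h₁₂ : p.1 ≠ q.2 := fun h =>
      hpq (hfst hp hq (h.trans (hR_cross p q (hMR p hp) (hMR q hq) h).symm))
    have h₂₁ : p.2 ≠ q.1 := fun h =>
      hpq (hfst hp hq ((hR_cross q p (hMR q hq) (hMR p hp) h.symm).trans h))
    simp only [disjoint_insert_left, disjoint_insert_right, disjoint_singleton_left,
      mem_insert, mem_singleton, not_or]
    exact ⟨⟨fun h => hpq (hfst hp hq h.symm), h₂₁.symm⟩, h₁₂, fun h => hpq (hsnd hp hq h)⟩
  · calc #((A ∪ B).filter _) ≤ #(A ∪ B) := card_filter_le _ _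
      _ ≤ #A + #B := card_union_le A B
      _ ≤ #M := hcard

end SimpleGraph

/-- `κ₃ = μ₃`. For non-adjacent vertices `u, v`, the minimum number of
vertices (excluding `u,v`) whose removal destroys all `u`-`v` paths with at most `3`
edges equals the maximum number of internally vertex-disjoint `u`-`v` paths with at most
`3` edges each. -/
theorem kappa_three_eq_mu_three {V : Type*} [Fintype V] [DecidableEq V]
    (G : SimpleGraph V) (u v : V) (huv : u ≠ v) (hna : ¬G.Adj u v) :
    sInf {n : ℕ | ∃ S : Finset V, S.card = n ∧ u ∉ S ∧ v ∉ S ∧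
        ∀ w : G.Walk u v, w.IsPath → w.length ≤ 3 → ∃ x ∈ w.support, x ∈ S}
      = sSup {m : ℕ | ∃ Q : Fin m → G.Walk u v,
          (∀ i, (Q i).IsPath ∧ (Q i).length ≤ 3) ∧
          ∀ i j, i ≠ j → InternallyDisjoint (Q i) (Q j)} := by
  obtain ⟨S, M, huS, hvS, hS, hM, hdisj, hcard⟩ :=
    G.exists_isShortRoute_cover_le_disjoint_family hna
  obtain ⟨Q, hQ⟩ := G.exists_isShortPathFamily_three_of_pairwise_disjoint huv hna M hM hdisj
  have hS_cut := G.isShortPathCut_three_of_forall_isShortRoute huv hna huS hvS hS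
  refine Nat.sInf_eq_sSup_of_forall_le ⟨S, rfl, hS_cut⟩ ⟨Q, hQ⟩ hcard ?_
  rintro _ ⟨S', rfl, hS'⟩ m ⟨Q', hQ'⟩
  exact SimpleGraph.IsShortPathFamily.card_le (G := G) hQ' hS'
end

section
/- If uv is a non-cut-edge of a finite graph G (i.e., uv lies on some cycle), then for every vertex w in the bi-connected component of G containing uv, there exists an elementary cycle in G passing through both the edge uv and the vertex w. -/
/-!
Let `e = uv`. The vertices of `C` lying on a cycle through `e` include `u` and are closed under
adjacency inside `C`. Indeed, if `w'` lies on such a cycle `c` and its neighbour `w ∈ C` does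
not, then `C \ {w'}` is connected and meets `c` (in `u` or `v`), so it contains a path from `w`
to a first vertex `y ≠ w'` of `c`. This path, the edge `ww'` and the arc of `c` from `w'` to `y`
that carries `e` form a cycle through `e` and `w`.
-/

namespace SimpleGraph

variable {V : Type*} {G : SimpleGraph V}

def HasCycleThrough (G : SimpleGraph V) (w : V) (e : Sym2 V) : Prop :=
  ∃ c : G.Walk w w, c.IsCycle ∧ e ∈ c.edges

namespace Walk

lemma IsCycle.hasCycleThrough [DecidableEq V] {x w : V} {e : Sym2 V} {c : G.Walk x x}
    (hc : c.IsCycle) (he : e ∈ c.edges) (hw : w ∈ c.support) : G.HasCycleThrough w e :=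
  ⟨c.rotate w hw, hc.rotate hw, (c.rotate_edges w hw).mem_iff.2 he⟩

lemma IsCycle.exists_isPath_mem_edges [DecidableEq V] {x y : V} {e : Sym2 V} {c : G.Walk x x}
    (hc : c.IsCycle) (hy : y ∈ c.support) (hxy : x ≠ y) (he : e ∈ c.edges) :
    ∃ p : G.Walk x y, p.IsPath ∧ e ∈ p.edges ∧ p.support ⊆ c.support := by
  rw [← c.take_spec hy, edges_append, List.mem_append] at he
  rcases he with he | he
  · exact ⟨_, hc.isPath_takeUntil hy, he, c.support_takeUntil_subset_support hy⟩
  · refine ⟨(c.dropUntil y hy).reverse,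
      ((hc.rotate hy).isPath_of_append_left (not_nil_of_ne hxy)).reverse, by simpa using he, ?_⟩
    simpa using c.support_dropUntil_subset_support hy

lemma exists_walk_to_first_mem {T : Set V} {a b : V} (p : G.Walk a b) (hb : b ∈ T) :
    ∃ y ∈ T, ∃ q : G.Walk a y, q.support ⊆ p.support ∧
      ∀ z ∈ q.support, z ∈ T → z = y := by
  induction p with
  | nil => exact ⟨_, hb, nil, by simp, by simp⟩
  | @cons a _ _ h p ih =>
    by_cases ha : a ∈ T
    · exact ⟨a, ha, nil, by simp, by simp⟩
    obtain ⟨y, hy, q, hqp, hqT⟩ := ih hb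
    refine ⟨y, hy, cons h q, ?_, ?_⟩
    · simpa using List.cons_subset_cons a hqp
    · simp only [support_cons, List.mem_cons, forall_eq_or_imp]
      exact ⟨fun h => absurd h ha, hqT⟩

end Walk

open Walk

lemma hasCycleThrough_of_adj_of_isPath [DecidableEq V] {w w' y : V} {e : Sym2 V}
    {c : G.Walk w' w'} (hc : c.IsCycle) (he : e ∈ c.edges) (hadj : G.Adj w w')
    (hw : w ∉ c.support) {q : G.Walk w y} (hq : q.IsPath) (hy : y ∈ c.support) (hyw' : y ≠ w')
    (hqc : ∀ z ∈ q.support, z ∈ c.support → z = y) : G.HasCycleThrough w e := by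
  obtain ⟨a, ha, hea, hac⟩ := hc.exists_isPath_mem_edges hy hyw'.symm he
  have hpath : (cons hadj a).IsPath := ha.cons fun h => hw (hac h)
  have hdisj : (cons hadj a).support.tail.Disjoint q.reverse.support.tail := by
    have hnd := hq.reverse.support_nodup
    rw [← cons_tail_support, List.nodup_cons] at hnd
    intro z hza hzq
    have hzy : z = y := hqc z (by simpa using List.mem_of_mem_tail hzq) (hac (by simpa using hza))
    exact hnd.1 (hzy ▸ hzq)
  have hlen : 1 < (cons hadj a).length := by
    have : a.length ≠ 0 := fun h => hyw' (eq_of_length_eq_zero h).symm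
    simp only [length_cons]; omega
  exact ⟨_, hpath.isCycle_append hq.reverse hdisj (Or.inl hlen), by simp [hea]⟩

lemma hasCycleThrough_of_adj_of_induce_preconnected [DecidableEq V] {S : Set V}
    (hS : (G.induce S).Preconnected) {w w' t : V} {e : Sym2 V} (hw : w ∈ S) (hw' : w' ∉ S)
    (hadj : G.Adj w w') {c : G.Walk w' w'} (hc : c.IsCycle) (he : e ∈ c.edges) (ht : t ∈ S)
    (htc : t ∈ c.support) :
    G.HasCycleThrough w e := by
  by_cases hwc : w ∈ c.support
  · exact hc.hasCycleThrough he hwc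
  obtain ⟨p⟩ := hS ⟨w, hw⟩ ⟨t, ht⟩
  have hpS : ∀ z ∈ (p.map (Embedding.induce S).toHom).support, z ∈ S := by
    intro z hz
    obtain ⟨z, -, rfl⟩ := List.mem_map.1 (Walk.support_map _ p ▸ hz)
    exact z.2
  obtain ⟨y, hy, q, hqp, hqc⟩ :=
    (p.map (Embedding.induce S).toHom).exists_walk_to_first_mem (T := {z | z ∈ c.support}) htc
  have hyS : y ∈ S := hpS y (hqp q.end_mem_support)
  exact hasCycleThrough_of_adj_of_isPath hc he hadj hwc q.bypass_isPath hy
    (ne_of_mem_of_not_mem hyS hw') fun z hz => hqc z (q.support_bypass_subset_support hz)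

end SimpleGraph

open SimpleGraph in
theorem cycle_through_edge_of_biconnected_general {V : Type*}
    (G : SimpleGraph V) (u v w : V) (huv : G.Adj u v)
    (hcyc : ∃ c : G.Walk u u, c.IsCycle ∧ s(u, v) ∈ c.edges)
    (C : Set V) (hu : u ∈ C) (hv : v ∈ C) (hw : w ∈ C)
    (h2conn : ∀ z ∈ C, (G.induce (C \ {z})).Connected) :
    ∃ c : G.Walk w w, c.IsCycle ∧ s(u, v) ∈ c.edges := by
  classical
  obtain ⟨c₀, hc₀, he₀⟩ := hcyc
  by_cases hwv : w = v
  · subst hwv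
    exact hc₀.hasCycleThrough he₀ (c₀.snd_mem_support_of_mem_edges he₀)
  have hreach := (h2conn v hv).preconnected ⟨w, hw, hwv⟩ ⟨u, hu, huv.ne⟩
  refine ((reachable_iff_reflTransGen _ _).1 hreach).head_induction_on
    (motive := fun a _ => G.HasCycleThrough a.1 s(u, v)) ⟨c₀, hc₀, he₀⟩ ?_
  intro ⟨a, ha, _⟩ ⟨b, hb, _⟩ hab _ ⟨c, hc, he⟩
  replace hab : G.Adj a b := induce_adj.1 hab
  obtain ⟨t, ht, htc⟩ : ∃ t ∈ C \ {b}, t ∈ c.support := by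
    by_cases hub : u = b
    · subst hub
      exact ⟨v, ⟨hv, huv.ne'⟩, c.snd_mem_support_of_mem_edges he⟩
    · exact ⟨u, ⟨hu, hub⟩, c.fst_mem_support_of_mem_edges he⟩
  exact hasCycleThrough_of_adj_of_induce_preconnected (h2conn b hb).preconnected ⟨ha, hab.ne⟩
    (by simp) hab hc he ht htc

/-- If `uv` is a non-cut-edge of `G` (it lies on some cycle), then
every vertex `w` of the bi-connected component containing `uv` — i.e. any vertex lying
together with `u` and `v` in a set `C` whose induced subgraph remains connected after
removing any one vertex — lies on an elementary cycle through the edge `uv`. -/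
theorem cycle_through_edge_of_biconnected {V : Type*} [Fintype V] [DecidableEq V]
    (G : SimpleGraph V) (u v w : V) (huv : G.Adj u v)
    (hcyc : ∃ c : G.Walk u u, c.IsCycle ∧ s(u, v) ∈ c.edges)
    (C : Set V) (hu : u ∈ C) (hv : v ∈ C) (hw : w ∈ C)
    (h2conn : ∀ z ∈ C, (G.induce (C \ {z})).Connected) :
    ∃ c : G.Walk w w, c.IsCycle ∧ s(u, v) ∈ c.edges :=
  cycle_through_edge_of_biconnected_general G u v w huv hcyc C hu hv hw h2conn
end
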